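/- arXiv:1712.06137 — 5 statements merged into one kernel-verified Lean document; each statement's English description precedes it below -/
import Mathlib

section
/- In the group algebra ℤG(m,1,n), the 1-shuffle element ⁽ᵐ⁾Ш_{1,n-1} satisfies the quadratic-type identity (⁽ᵐ⁾Ш_{1,n-1})² = ⁽ᵐ⁾Ш_{1,n-1} · (m + ⁽ᵐ⁾Ш_{1,n-2}), where ⁽ᵐ⁾Ш_{1,n-2} denotes the corresponding element of ℤG(m,1,n-1) viewed inside ℤG(m,1,n). -/
open Finset Multiplicative

/-- The cyclic group of order `m` (written multiplicatively). -/
abbrev Cm (m : ℕ) : Type := Multiplicative (ZMod m)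

/-- The action of `S_n` on `(C_m)^n` permuting coordinates. -/
def wrAct (m n : ℕ) : Equiv.Perm (Fin n) →* MulAut (Fin n → Cm m) where
  toFun σ :=
    { toFun := fun f => f ∘ σ.symm
      invFun := fun f => f ∘ σ
      left_inv := fun f => by ext i; simp
      right_inv := fun f => by ext i; simp
      map_mul' := fun f g => rfl }
  map_one' := by ext f i; rfl
  map_mul' := fun σ τ => by ext f i; rfl

/-- The wreath product `C_m ≀ S_n = (C_m)^n ⋊ S_n`, i.e. the group `G(m,1,n)`. -/
abbrev GG (m n : ℕ) := (Fin n → Cm m) ⋊[wrAct m n] Equiv.Perm (Fin n)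

def ggEquiv (m n : ℕ) : GG m n ≃ (Fin n → Cm m) × Equiv.Perm (Fin n) where
  toFun g := (g.left, g.right)
  invFun p := ⟨p.1, p.2⟩
  left_inv _ := rfl
  right_inv _ := rfl

instance (m n : ℕ) [NeZero m] : Fintype (GG m n) :=
  Fintype.ofEquiv _ (ggEquiv m n).symm

instance (m n : ℕ) : DecidableEq (GG m n) := (ggEquiv m n).decidableEq

/-- The generator `s_{i+1}` of `G(m,1,n)`: the simple transposition `(i+1, i+2)`
(0-indexed: `sGen m n i` swaps positions `i` and `i+1`). -/
def sGen (m n : ℕ) (i : ℕ) : GG m n :=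
  if h : i + 1 < n then
    SemidirectProduct.inr (Equiv.swap ⟨i, Nat.lt_of_succ_lt h⟩ ⟨i + 1, h⟩) else 1

/-- The generator `t_{i+1}` of `G(m,1,n)`, rotating the `(i+1)`-st card (0-indexed). -/
def tGen (m n : ℕ) (i : ℕ) : GG m n :=
  if h : i < n then
    SemidirectProduct.inl (Pi.mulSingle ⟨i, h⟩ (ofAdd (1 : ZMod m))) else 1

/-- `⁽ᵐ⁾Ш_{1,k-1} = (1 + s_{k-1} + s_{k-2}s_{k-1} + ⋯ + s_1⋯s_{k-1})(1 + t_k + ⋯ + t_k^{m-1})`,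
viewed inside `ℤ G(m,1,n)` (case `k = n` is the 1-shuffle element of `G(m,1,n)` itself). -/
noncomputable def msha (m n k : ℕ) : MonoidAlgebra ℤ (GG m n) :=
  (∑ l ∈ Finset.range k, MonoidAlgebra.of ℤ (GG m n)
      (((List.range l).map (fun p => sGen m n (k - 1 - l + p))).prod)) *
  (∑ a ∈ Finset.range m, MonoidAlgebra.of ℤ (GG m n) (tGen m n (k - 1) ^ a))

namespace MshaAux


def sP (n : ℕ) (i : ℕ) : Equiv.Perm (Fin n) :=
  if h : i + 1 < n then Equiv.swap ⟨i, Nat.lt_of_succ_lt h⟩ ⟨i + 1, h⟩ else 1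

lemma sGen_eq_inr (m n i : ℕ) : sGen m n i = SemidirectProduct.inr (sP n i) := by
  unfold sGen sP
  split
  · rfl
  · simp

def runP (n a b : ℕ) : Equiv.Perm (Fin n) :=
  ((List.range (b - a)).map (fun p => sP n (a + p))).prod

def runG (m n a b : ℕ) : GG m n :=
  ((List.range (b - a)).map (fun p => sGen m n (a + p))).prod

lemma runG_eq_inr (m n a b : ℕ) : runG m n a b = SemidirectProduct.inr (runP n a b) := by
  unfold runG runP
  rw [map_list_prod, List.map_map]
  exact congrArg List.prod (List.map_congr_left (fun p _ => sGen_eq_inr m n (a + p)))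

lemma runP_apply_val (n a : ℕ) : ∀ b : ℕ, b < n → ∀ x : Fin n,
    ((runP n a b) x).val =
      if a ≤ x.val ∧ x.val < b then x.val + 1
      else if a < b ∧ x.val = b then a else x.val := by
  intro b
  induction b with
  | zero =>
    intro _ x
    simp only [runP, Nat.zero_sub, List.range_zero, List.map_nil, List.prod_nil,
      Equiv.Perm.one_apply]
    split_ifs <;> omega
  | succ b ih =>
    intro hb x
    rcases le_or_gt (b + 1) a with h | h
    · have h0 : b + 1 - a = 0 := by omega
      simp only [runP, h0, List.range_zero, List.map_nil, List.prod_nil, Equiv.Perm.one_apply]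
      have := x.isLt
      split_ifs <;> omega
    · have ha : a ≤ b := by omega
      have hb' : b < n := by omega
      have hsplit : runP n a (b + 1) = runP n a b * sP n b := by
        unfold runP
        rw [show b + 1 - a = (b - a) + 1 from by omega, List.range_succ, List.map_append,
          List.prod_append]
        simp [show a + (b - a) = b from by omega]
      have hy : ((sP n b) x).val = if x.val = b then b + 1 else if x.val = b + 1 then b else x.val := by
        rw [sP, dif_pos hb]
        simp only [Equiv.swap_apply_def]
        split_ifs with h1 h2 h3 h4 <;> simp_all [Fin.ext_iff]
      rw [hsplit]
      rw [Equiv.Perm.mul_apply, ih hb', hy]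
      have := x.isLt
      split_ifs <;> omega



lemma runP_I2 (n a b : ℕ) (hn : 2 ≤ n) (hba : b < a) (ha : a ≤ n - 1) :
    runP n a (n-1) * runP n b (n-1) = runP n b (n-1) * runP n (a-1) (n-2) := by
  ext x
  have hx := x.isLt
  simp only [Equiv.Perm.mul_apply]
  rw [runP_apply_val n a (n-1) (by omega), runP_apply_val n b (n-1) (by omega),
    runP_apply_val n b (n-1) (by omega), runP_apply_val n (a-1) (n-2) (by omega)]
  split_ifs <;> omega

lemma runP_I1 (n a b : ℕ) (hn : 2 ≤ n) (hab : a ≤ b) (hb : b < n - 1) :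
    runP n a (n-1) * runP n b (n-1) = runP n (b+1) (n-1) * runP n a (n-2) := by
  ext x
  have hx := x.isLt
  simp only [Equiv.Perm.mul_apply]
  rw [runP_apply_val n a (n-1) (by omega), runP_apply_val n b (n-1) (by omega),
    runP_apply_val n (b+1) (n-1) (by omega), runP_apply_val n a (n-2) (by omega)]
  split_ifs <;> omega

lemma runP_fixes (n a : ℕ) (hn : 2 ≤ n) :
    runP n a (n-2) ⟨n-1, by omega⟩ = ⟨n-1, by omega⟩ := by
  apply Fin.val_injective
  have hv : ((⟨n-1, by omega⟩ : Fin n)).val = n - 1 := rfl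
  rw [runP_apply_val n a (n-2) (by omega)]
  simp only [hv]
  split_ifs <;> omega


lemma runG_I2 (m n a b : ℕ) (hn : 2 ≤ n) (hba : b < a) (ha : a ≤ n - 1) :
    runG m n a (n-1) * runG m n b (n-1) = runG m n b (n-1) * runG m n (a-1) (n-2) := by
  simp only [runG_eq_inr, ← map_mul, runP_I2 n a b hn hba ha]

lemma runG_I1 (m n a b : ℕ) (hn : 2 ≤ n) (hab : a ≤ b) (hb : b < n - 1) :
    runG m n a (n-1) * runG m n b (n-1) = runG m n (b+1) (n-1) * runG m n a (n-2) := by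
  simp only [runG_eq_inr, ← map_mul, runP_I1 n a b hn hab hb]

lemma runG_append (m n a b : ℕ) (hab : a ≤ b) :
    runG m n a (b+1) = runG m n a b * sGen m n b := by
  unfold runG
  rw [show b + 1 - a = (b - a) + 1 from by omega, List.range_succ, List.map_append,
    List.prod_append]
  simp [show a + (b - a) = b from by omega]

lemma runG_self (m n a : ℕ) : runG m n a a = 1 := by
  simp [runG]

lemma inr_mul_inl (m n : ℕ) (σ : Equiv.Perm (Fin n)) (f : Fin n → Cm m) :
    (SemidirectProduct.inr σ : GG m n) * SemidirectProduct.inl f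
      = SemidirectProduct.inl (wrAct m n σ f) * SemidirectProduct.inr σ := by
  rw [SemidirectProduct.inl_aut]
  simp [mul_assoc]

lemma wrAct_mulSingle (m n : ℕ) (σ : Equiv.Perm (Fin n)) (i : Fin n) (x : Cm m) :
    wrAct m n σ (Pi.mulSingle i x) = Pi.mulSingle (σ i) x := by
  funext j
  have h0 : ((wrAct m n) σ) (Pi.mulSingle i x) j
      = (Pi.mulSingle i x : Fin n → Cm m) (σ.symm j) := rfl
  rw [h0]
  simp [Pi.mulSingle_apply, Equiv.symm_apply_eq]

lemma tGen_pow (m n j : ℕ) (hj : j < n) (b : ℕ) :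
    tGen m n j ^ b = SemidirectProduct.inl
      (Pi.mulSingle (⟨j, hj⟩ : Fin n) (ofAdd ((b : ℕ) : ZMod m)) : Fin n → Cm m) := by
  unfold tGen
  rw [dif_pos hj, ← map_pow]
  congr 1
  have h1 : ((Pi.mulSingle (⟨j, hj⟩ : Fin n) (ofAdd (1 : ZMod m)) : Fin n → Cm m)) ^ b
      = (Pi.mulSingle (⟨j, hj⟩ : Fin n) ((ofAdd (1 : ZMod m)) ^ b) : Fin n → Cm m) :=
    (map_pow (MonoidHom.mulSingle (fun _ : Fin n => Cm m) ⟨j, hj⟩) _ b).symm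
  rw [h1]
  congr 1
  rw [show ((ofAdd (1 : ZMod m)) ^ b) = ofAdd (b • (1 : ZMod m)) from rfl]
  congr 1
  simp

lemma tGen_pow_m (m n j : ℕ) (hj : j < n) : tGen m n j ^ m = 1 := by
  rw [tGen_pow m n j hj m]
  simp [ZMod.natCast_self]

lemma inl_comm (m n : ℕ) (f g : Fin n → Cm m) :
    (SemidirectProduct.inl f : GG m n) * SemidirectProduct.inl g
      = SemidirectProduct.inl g * SemidirectProduct.inl f := by
  rw [← map_mul, ← map_mul, mul_comm]


lemma sP_eq (n : ℕ) (hn : 2 ≤ n) :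
    sP n (n-2) = Equiv.swap ⟨n-2, by omega⟩ ⟨n-1, by omega⟩ := by
  rw [sP, dif_pos (by omega : n - 2 + 1 < n)]
  congr 1
  apply Fin.val_injective
  show n - 2 + 1 = n - 1
  omega

lemma s_mul_t_pow (m n : ℕ) (hn : 2 ≤ n) (b : ℕ) :
    sGen m n (n-2) * tGen m n (n-1) ^ b = tGen m n (n-2) ^ b * sGen m n (n-2) := by
  rw [sGen_eq_inr, tGen_pow m n (n-1) (by omega) b, tGen_pow m n (n-2) (by omega) b,
    inr_mul_inl, wrAct_mulSingle, sP_eq n hn, Equiv.swap_apply_right]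

lemma s_mul_t'_pow (m n : ℕ) (hn : 2 ≤ n) (b : ℕ) :
    sGen m n (n-2) * tGen m n (n-2) ^ b = tGen m n (n-1) ^ b * sGen m n (n-2) := by
  rw [sGen_eq_inr, tGen_pow m n (n-1) (by omega) b, tGen_pow m n (n-2) (by omega) b,
    inr_mul_inl, wrAct_mulSingle, sP_eq n hn, Equiv.swap_apply_left]

lemma dd_mul_t_pow (m n a : ℕ) (hn : 2 ≤ n) (b : ℕ) :
    runG m n a (n-2) * tGen m n (n-1) ^ b = tGen m n (n-1) ^ b * runG m n a (n-2) := by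
  rw [runG_eq_inr, tGen_pow m n (n-1) (by omega) b, inr_mul_inl, wrAct_mulSingle,
    runP_fixes n a hn]

lemma t_mul_t'_pow (m n : ℕ) (hn : 2 ≤ n) (a b : ℕ) :
    tGen m n (n-1) ^ a * tGen m n (n-2) ^ b = tGen m n (n-2) ^ b * tGen m n (n-1) ^ a := by
  rw [tGen_pow m n (n-1) (by omega), tGen_pow m n (n-2) (by omega), inl_comm]



local notation "of" => MonoidAlgebra.of ℤ (GG _ _)

lemma msha_eq (m n k : ℕ) :
    msha m n k = (∑ l ∈ Finset.range k,
        MonoidAlgebra.of ℤ (GG m n) (runG m n (k-1-l) (k-1)))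
      * (∑ a ∈ Finset.range m, MonoidAlgebra.of ℤ (GG m n) (tGen m n (k-1) ^ a)) := by
  unfold msha
  congr 1
  refine Finset.sum_congr rfl fun l hl => ?_
  have hl' : l < k := Finset.mem_range.mp hl
  congr 1
  unfold runG
  rw [show k - 1 - (k - 1 - l) = l from by omega]

lemma AA_decomp (m n : ℕ) (hn : 2 ≤ n) :
    (∑ u ∈ Finset.range n, MonoidAlgebra.of ℤ (GG m n) (runG m n (n-1-u) (n-1)))
      = 1 + (∑ v ∈ Finset.range (n-1),
          MonoidAlgebra.of ℤ (GG m n) (runG m n (n-2-v) (n-2)))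
        * MonoidAlgebra.of ℤ (GG m n) (sGen m n (n-2)) := by
  rw [show Finset.range n = Finset.range ((n-1)+1) from by rw [Nat.sub_add_cancel (by omega)],
    Finset.sum_range_succ']
  have h0 : MonoidAlgebra.of ℤ (GG m n) (runG m n (n-1-0) (n-1)) = 1 := by
    rw [Nat.sub_zero, runG_self, map_one]
  rw [h0, add_comm]
  congr 1
  rw [Finset.sum_mul]
  refine Finset.sum_congr rfl fun v hv => ?_
  have hv' : v < n - 1 := Finset.mem_range.mp hv
  rw [show n-1-(v+1) = n-2-v from by omega, ← map_mul]
  congr 1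
  rw [show n-1 = (n-2)+1 from by omega, runG_append m n _ _ (by omega)]

lemma TT_mul_t (m n : ℕ) (hn : 2 ≤ n) (hm : 0 < m) :
    (∑ a ∈ Finset.range m, MonoidAlgebra.of ℤ (GG m n) (tGen m n (n-1) ^ a))
      * MonoidAlgebra.of ℤ (GG m n) (tGen m n (n-1))
    = ∑ a ∈ Finset.range m, MonoidAlgebra.of ℤ (GG m n) (tGen m n (n-1) ^ a) := by
  obtain ⟨k, rfl⟩ : ∃ k, m = k + 1 := ⟨m-1, by omega⟩
  rw [Finset.sum_mul]
  simp_rw [← map_mul, ← pow_succ]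
  rw [Finset.sum_range_succ, Finset.sum_range_succ']
  congr 1
  rw [tGen_pow_m (k+1) n (n-1) (by omega), pow_zero]

lemma TT_mul_tpow (m n : ℕ) (hn : 2 ≤ n) (hm : 0 < m) (b : ℕ) :
    (∑ a ∈ Finset.range m, MonoidAlgebra.of ℤ (GG m n) (tGen m n (n-1) ^ a))
      * MonoidAlgebra.of ℤ (GG m n) (tGen m n (n-1) ^ b)
    = ∑ a ∈ Finset.range m, MonoidAlgebra.of ℤ (GG m n) (tGen m n (n-1) ^ a) := by
  induction b with
  | zero => rw [pow_zero, map_one, mul_one]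
  | succ b ih => rw [pow_succ, map_mul, ← mul_assoc, ih, TT_mul_t m n hn hm]

lemma TT_sq (m n : ℕ) (hn : 2 ≤ n) (hm : 0 < m) :
    (∑ a ∈ Finset.range m, MonoidAlgebra.of ℤ (GG m n) (tGen m n (n-1) ^ a))
      * (∑ a ∈ Finset.range m, MonoidAlgebra.of ℤ (GG m n) (tGen m n (n-1) ^ a))
    = (m : MonoidAlgebra ℤ (GG m n))
      * (∑ a ∈ Finset.range m, MonoidAlgebra.of ℤ (GG m n) (tGen m n (n-1) ^ a)) := by
  rw [Finset.mul_sum]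
  simp_rw [TT_mul_tpow m n hn hm]
  rw [Finset.sum_const, Finset.card_range, nsmul_eq_mul]


lemma TT_mul_ss (m n : ℕ) (hn : 2 ≤ n) :
    (∑ a ∈ Finset.range m, MonoidAlgebra.of ℤ (GG m n) (tGen m n (n-1) ^ a))
      * MonoidAlgebra.of ℤ (GG m n) (sGen m n (n-2))
    = MonoidAlgebra.of ℤ (GG m n) (sGen m n (n-2))
      * (∑ a ∈ Finset.range m, MonoidAlgebra.of ℤ (GG m n) (tGen m n (n-2) ^ a)) := by
  rw [Finset.sum_mul, Finset.mul_sum]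
  refine Finset.sum_congr rfl fun a _ => ?_
  rw [← map_mul, ← map_mul, s_mul_t'_pow m n hn a]

lemma DD_mul_TT (m n : ℕ) (hn : 2 ≤ n) :
    (∑ v ∈ Finset.range (n-1), MonoidAlgebra.of ℤ (GG m n) (runG m n (n-2-v) (n-2)))
      * (∑ a ∈ Finset.range m, MonoidAlgebra.of ℤ (GG m n) (tGen m n (n-1) ^ a))
    = (∑ a ∈ Finset.range m, MonoidAlgebra.of ℤ (GG m n) (tGen m n (n-1) ^ a))
      * (∑ v ∈ Finset.range (n-1), MonoidAlgebra.of ℤ (GG m n) (runG m n (n-2-v) (n-2))) := by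
  rw [Finset.sum_mul_sum, Finset.sum_mul_sum, Finset.sum_comm]
  refine Finset.sum_congr rfl fun a _ => Finset.sum_congr rfl fun v _ => ?_
  rw [← map_mul, ← map_mul, dd_mul_t_pow m n _ hn a]

lemma TT'_mul_TT (m n : ℕ) (hn : 2 ≤ n) :
    (∑ a ∈ Finset.range m, MonoidAlgebra.of ℤ (GG m n) (tGen m n (n-2) ^ a))
      * (∑ a ∈ Finset.range m, MonoidAlgebra.of ℤ (GG m n) (tGen m n (n-1) ^ a))
    = (∑ a ∈ Finset.range m, MonoidAlgebra.of ℤ (GG m n) (tGen m n (n-1) ^ a))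
      * (∑ a ∈ Finset.range m, MonoidAlgebra.of ℤ (GG m n) (tGen m n (n-2) ^ a)) := by
  rw [Finset.sum_mul_sum, Finset.sum_mul_sum, Finset.sum_comm]
  refine Finset.sum_congr rfl fun a _ => Finset.sum_congr rfl fun b _ => ?_
  rw [← map_mul, ← map_mul, ← t_mul_t'_pow m n hn a b]

lemma AADD_mul_ss (m n : ℕ) (hn : 2 ≤ n) :
    ((∑ u ∈ Finset.range n, MonoidAlgebra.of ℤ (GG m n) (runG m n (n-1-u) (n-1)))
      * (∑ v ∈ Finset.range (n-1), MonoidAlgebra.of ℤ (GG m n) (runG m n (n-2-v) (n-2))))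
      * MonoidAlgebra.of ℤ (GG m n) (sGen m n (n-2))
    = (∑ u ∈ Finset.range n, MonoidAlgebra.of ℤ (GG m n) (runG m n (n-1-u) (n-1)))
      * (∑ v ∈ Finset.range (n-1), MonoidAlgebra.of ℤ (GG m n) (runG m n (n-2-v) (n-2))) := by
  rw [Finset.sum_mul_sum, Finset.sum_mul]
  simp_rw [Finset.sum_mul, ← map_mul]
  rw [← Finset.sum_product', ← Finset.sum_product']
  refine Finset.sum_nbij'
    (fun x => if x.1 ≤ x.2 then (x.2 + 1, x.1) else (x.2, x.1 - 1))
    (fun x => if x.1 ≤ x.2 then (x.2 + 1, x.1) else (x.2, x.1 - 1))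
    ?_ ?_ ?_ ?_ ?_
  · rintro ⟨u, v⟩ h
    simp only [Finset.mem_product, Finset.mem_range] at h ⊢
    split_ifs <;> omega
  · rintro ⟨p, q⟩ h
    simp only [Finset.mem_product, Finset.mem_range] at h ⊢
    split_ifs <;> omega
  · rintro ⟨u, v⟩ h
    simp only [Finset.mem_product, Finset.mem_range] at h
    dsimp only
    rcases le_or_gt u v with h1 | h1
    · rw [if_pos h1]
      dsimp only
      rw [if_neg (by omega : ¬ (v + 1 ≤ u))]
      simp only [Prod.mk.injEq, true_and, and_true]
      omega
    · rw [if_neg (by omega : ¬ (u ≤ v))]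
      dsimp only
      rw [if_pos (by omega : v ≤ u - 1)]
      simp only [Prod.mk.injEq, true_and, and_true]
      omega
  · rintro ⟨u, v⟩ h
    simp only [Finset.mem_product, Finset.mem_range] at h
    dsimp only
    rcases le_or_gt u v with h1 | h1
    · rw [if_pos h1]
      dsimp only
      rw [if_neg (by omega : ¬ (v + 1 ≤ u))]
      simp only [Prod.mk.injEq, true_and, and_true]
      omega
    · rw [if_neg (by omega : ¬ (u ≤ v))]
      dsimp only
      rw [if_pos (by omega : v ≤ u - 1)]
      simp only [Prod.mk.injEq, true_and, and_true]
      omega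
  · rintro ⟨u, v⟩ h
    simp only [Finset.mem_product, Finset.mem_range] at h
    obtain ⟨hu, hv⟩ := h
    have hdd : runG m n (n-2-v) (n-2) * sGen m n (n-2) = runG m n (n-2-v) (n-1) := by
      rw [show n-1 = (n-2)+1 from by omega, runG_append m n _ _ (by omega)]
    by_cases huv : u ≤ v
    · simp only [huv, if_true]
      congr 1
      rw [mul_assoc, hdd]
      have := runG_I2 m n (n-1-u) (n-2-v) hn (by omega) (by omega)
      rw [show n-1-u-1 = n-2-u from by omega] at this
      rw [this, show n-1-(v+1) = n-2-v from by omega]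
    · simp only [huv, if_false]
      congr 1
      rw [mul_assoc, hdd]
      have := runG_I1 m n (n-1-u) (n-2-v) hn (by omega) (by omega)
      rw [show n-2-v+1 = n-1-v from by omega] at this
      rw [this, show n-2-(u-1) = n-1-u from by omega]


lemma final_calc {R : Type*} [Ring R] (AA DD TT TT' ss C : R)
    (h1 : AA = 1 + DD * ss)
    (h2 : TT * TT = C * TT) (hC : ∀ X : R, C * X = X * C)
    (h3 : TT * ss = ss * TT')
    (h4 : DD * TT = TT * DD)
    (h5 : TT' * TT = TT * TT')
    (h6 : AA * DD * ss = AA * DD) :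
    (AA * TT) * (AA * TT) = (AA * TT) * (C + DD * TT') := by
  have key : TT * (AA * TT) = C * TT + DD * (ss * (TT' * TT)) := by
    calc TT * (AA * TT) = (TT * AA) * TT := (mul_assoc _ _ _).symm
    _ = (TT + DD * (ss * TT')) * TT := by
        rw [h1, mul_add, mul_one, ← mul_assoc TT DD ss, ← h4, mul_assoc DD TT ss, h3]
    _ = C * TT + DD * (ss * (TT' * TT)) := by
        rw [add_mul, h2, mul_assoc DD (ss * TT') TT, mul_assoc ss TT' TT]
  calc (AA * TT) * (AA * TT) = AA * (TT * (AA * TT)) := by rw [mul_assoc]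
  _ = AA * (C * TT) + AA * (DD * (ss * (TT' * TT))) := by rw [key, mul_add]
  _ = (AA * TT) * C + (AA * DD * ss) * (TT' * TT) := by
      rw [hC TT, ← mul_assoc AA TT C, ← mul_assoc AA DD (ss * (TT' * TT)),
        ← mul_assoc (AA * DD) ss (TT' * TT)]
  _ = (AA * TT) * C + (AA * DD) * (TT' * TT) := by rw [h6]
  _ = (AA * TT) * C + (AA * TT) * (DD * TT') := by
      rw [h5, ← mul_assoc (AA * DD) TT TT', mul_assoc AA DD TT, h4, ← mul_assoc AA TT DD,
        mul_assoc (AA * TT) DD TT']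
  _ = (AA * TT) * (C + DD * TT') := by rw [mul_add]


end MshaAux

/-- In `ℤ G(m,1,n)`, the 1-shuffle element satisfies
`(⁽ᵐ⁾Ш_{1,n-1})² = ⁽ᵐ⁾Ш_{1,n-1} · (m + ⁽ᵐ⁾Ш_{1,n-2})`, where `⁽ᵐ⁾Ш_{1,n-2}` is the
corresponding element of `ℤ G(m,1,n-1)` viewed inside `ℤ G(m,1,n)`. -/
theorem msha_sq (m n : ℕ) (hn : 2 ≤ n) :
    msha m n n * msha m n n = msha m n n * ((m : MonoidAlgebra ℤ (GG m n)) + msha m n (n - 1)) := by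
  rcases Nat.eq_zero_or_pos m with rfl | hm
  · simp [msha]
  rw [MshaAux.msha_eq m n n, MshaAux.msha_eq m n (n-1)]
  simp only [show n - 1 - 1 = n - 2 from by omega]
  exact MshaAux.final_calc _ _ _ _ _ _
    (MshaAux.AA_decomp m n hn)
    (MshaAux.TT_sq m n hn hm)
    (fun X => (Nat.cast_commute m X).eq)
    (MshaAux.TT_mul_ss m n hn)
    (MshaAux.DD_mul_TT m n hn)
    (MshaAux.TT'_mul_TT m n hn)
    (MshaAux.AADD_mul_ss m n hn)
end

section
/- In ℤG(m,1,n), the product ∏_{i=0}^{n-1} (⁽ᵐ⁾Ш_{1,n-1} − i·m) equals the sum of all elements of the group G(m,1,n). -/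
open Finset Multiplicative

/-!
Let `T_k = sortedPrefixSet m n (n - k)` be the set of `g ∈ G(m,1,n)` whose first `n - k`
positions are in increasing order and carry trivial color, so `T_0 = {1}` and `T_n = G`.
The shuffle element is `∑ r a, u_{r,a}` with `u_{r,a} = shuffleTerm r a`, and `g ↦ g u_{r,a}`
moves the card at position `r` to the end, adding `a` to its color. For `r ≥ n - k` this does
not touch the first `n - k` positions, so it permutes `T_k`: these `k m` terms contribute
`k m · ΣT_k`. For `r < n - k`, `(g, r, a) ↦ g u_{r,a}` is a bijection from
`T_k × [0, n - k) × [0, m)` onto `T_{k+1}`, whose inverse inserts the last card into its sorted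
place among the first `n - k - 1`. Hence `ΣT_k · (Ш - k m) = ΣT_{k+1}`, and the product
telescopes to `ΣT_n`.
-/

section InsertAt

variable {α : Type*} [LinearOrder α]

def insertAt (s : ℕ → α) (c : α) (r i : ℕ) : α :=
  if i < r then s i else if i = r then c else s (i - 1)

theorem not_strictMonoOn_insertAt_of_lt {s : ℕ → α} {c : α} {r r' w : ℕ} (hrr' : r < r')
    (hr' : r' ≤ w) (h : StrictMonoOn (insertAt s c r) (Set.Iio (w + 1))) :
    ¬StrictMonoOn (insertAt s c r') (Set.Iio (w + 1)) := by
  intro h'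
  have hcs : c < s r := by
    simpa [insertAt] using
      h (Set.mem_Iio.2 (by omega)) (Set.mem_Iio.2 (by omega)) (Nat.lt_succ_self r)
  have hsc : s r < c := by
    simpa [insertAt, hrr'] using h' (Set.mem_Iio.2 (by omega)) (Set.mem_Iio.2 (by omega)) hrr'
  exact lt_asymm hcs hsc

theorem eq_of_strictMonoOn_insertAt {s : ℕ → α} {c : α} {r r' w : ℕ} (hr : r ≤ w)
    (hr' : r' ≤ w) (h : StrictMonoOn (insertAt s c r) (Set.Iio (w + 1)))
    (h' : StrictMonoOn (insertAt s c r') (Set.Iio (w + 1))) : r = r' := by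
  rcases lt_trichotomy r r' with hlt | heq | hgt
  · exact absurd h' (not_strictMonoOn_insertAt_of_lt hlt hr' h)
  · exact heq
  · exact absurd h (not_strictMonoOn_insertAt_of_lt hgt hr h')

theorem exists_strictMonoOn_insertAt {s : ℕ → α} {c : α} {w : ℕ}
    (hs : StrictMonoOn s (Set.Iio w)) (hc : ∀ i < w, s i ≠ c) :
    ∃ r ≤ w, StrictMonoOn (insertAt s c r) (Set.Iio (w + 1)) := by
  have hex : ∃ r, r = w ∨ c < s r := ⟨w, Or.inl rfl⟩
  set r := Nat.find hex
  have hrw : r ≤ w := Nat.find_min' hex (Or.inl rfl)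
  have below : ∀ j < r, s j < c := fun j hj =>
    (not_lt.mp (not_or.mp (Nat.find_min hex hj)).2).lt_of_ne (hc j (by omega))
  have above : ∀ j, r ≤ j → j < w → c < s j := fun j hrj hjw =>
    ((Nat.find_spec hex).resolve_left (show r ≠ w by omega)).trans_le
      (hs.monotoneOn (Set.mem_Iio.2 (by omega)) (Set.mem_Iio.2 hjw) hrj)
  refine ⟨r, hrw, fun i hi j hj hij => ?_⟩
  simp only [Set.mem_Iio] at hi hj
  unfold insertAt
  split_ifs <;> first
    | omega
    | exact below _ (by omega)
    | exact above _ (by omega) (by omega)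
    | exact hs (Set.mem_Iio.2 (by omega)) (Set.mem_Iio.2 (by omega)) (by omega)

end InsertAt

namespace GG

open SemidirectProduct Equiv

variable {m n : ℕ}

/-- `Fin.cycleIcc r (n - 1)`, written out on values. -/
def cycleFrom (n r : ℕ) : Perm (Fin n) where
  toFun i := ⟨if (i : ℕ) < r then (i : ℕ) else if (i : ℕ) = n - 1 then r else (i : ℕ) + 1,
    by split_ifs <;> omega⟩
  invFun i := ⟨if (i : ℕ) < r then (i : ℕ) else if (i : ℕ) = r then n - 1 else (i : ℕ) - 1,
    by split_ifs <;> omega⟩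
  left_inv i := by ext; dsimp only; split_ifs <;> omega
  right_inv i := by ext; dsimp only; split_ifs <;> omega

theorem cycleFrom_apply_val (r : ℕ) (i : Fin n) :
    (cycleFrom n r i : ℕ) =
      if (i : ℕ) < r then (i : ℕ) else if (i : ℕ) = n - 1 then r else (i : ℕ) + 1 :=
  rfl

theorem cycleFrom_symm_apply_val (r : ℕ) (i : Fin n) :
    ((cycleFrom n r).symm i : ℕ) =
      if (i : ℕ) < r then (i : ℕ) else if (i : ℕ) = r then n - 1 else (i : ℕ) - 1 :=
  rfl

theorem cycleFrom_sub_one : cycleFrom n (n - 1) = 1 := by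
  ext i
  simp only [cycleFrom_apply_val, Perm.coe_one, id_eq]
  split_ifs <;> omega

theorem swap_mul_cycleFrom_succ {r : ℕ} (h : r + 1 < n) :
    swap ⟨r, by omega⟩ ⟨r + 1, h⟩ * cycleFrom n (r + 1) = cycleFrom n r := by
  ext i
  simp only [Perm.mul_apply, swap_apply_def]
  split_ifs <;> simp only [Fin.ext_iff, cycleFrom_apply_val] at * <;> split_ifs at * <;> omega

theorem sGen_eq_inr_swap (i : ℕ) (h : i + 1 < n) :
    sGen m n i = inr (swap ⟨i, by omega⟩ ⟨i + 1, h⟩) := by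
  rw [sGen, dif_pos h]

theorem prod_sGen_eq_inr_cycleFrom (r l : ℕ) (h : r + l + 1 = n) :
    ((List.range l).map fun p => sGen m n (r + p)).prod = inr (cycleFrom n r) := by
  induction l generalizing r with
  | zero => simp [show r = n - 1 by omega, cycleFrom_sub_one]
  | succ l ih =>
    rw [List.range_succ_eq_map, List.map_cons, List.map_map, List.prod_cons, add_zero]
    have hshift : (fun p => sGen m n (r + p)) ∘ Nat.succ = fun p => sGen m n (r + 1 + p) := by
      funext p
      simp only [Function.comp_apply, add_assoc, add_comm 1 p]
    rw [hshift, ih (r + 1) (by omega), sGen_eq_inr_swap r (by omega), ← map_mul,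
      swap_mul_cycleFrom_succ (by omega)]

theorem tGen_sub_one_pow (a : ℕ) :
    tGen m n (n - 1) ^ a =
      inl fun i : Fin n => if (i : ℕ) = n - 1 then ofAdd (a : ZMod m) else 1 := by
  unfold tGen
  split_ifs with h
  · rw [← map_pow, ← Pi.mulSingle_pow]
    congr 1
    ext i
    simp [Pi.mulSingle_apply, Fin.ext_iff, ← ofAdd_nsmul]
  · obtain rfl : n = 0 := by omega
    simp [Subsingleton.elim _ (1 : Fin 0 → Cm m)]

/-- `s_{r+1} ⋯ s_{n-1} t_n^a`, in the 1-indexed notation of `msha`. -/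
def shuffleTerm (r a : ℕ) : GG m n :=
  inr (cycleFrom n r) * inl fun i : Fin n => if (i : ℕ) = n - 1 then ofAdd (a : ZMod m) else 1

theorem msha_eq_sum_shuffleTerm :
    msha m n n = ∑ r ∈ range n, ∑ a ∈ range m, MonoidAlgebra.of ℤ (GG m n) (shuffleTerm r a) := by
  rw [msha, sum_mul_sum,
    ← sum_range_reflect (fun r => ∑ a ∈ range m, MonoidAlgebra.of ℤ (GG m n) (shuffleTerm r a))]
  refine sum_congr rfl fun l hl => sum_congr rfl fun a _ => ?_
  rw [← map_mul, prod_sGen_eq_inr_cycleFrom (n - 1 - l) l (by simp at hl; omega),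
    tGen_sub_one_pow, shuffleTerm]

def color (g : GG m n) (i : Fin n) : Cm m := g.left (g.right i)

theorem color_mul (g h : GG m n) (i : Fin n) :
    color (g * h) i = color g (h.right i) * color h i := by
  simp [color, wrAct]

def permSeq (g : GG m n) (i : ℕ) : ℕ := if h : i < n then g.right ⟨i, h⟩ else i

theorem permSeq_mul_of_lt (g h : GG m n) {i : ℕ} (hi : i < n) :
    permSeq (g * h) i = permSeq g (h.right ⟨i, hi⟩) := by
  simp [permSeq, hi]

@[simp] theorem right_shuffleTerm (r a : ℕ) :
    (shuffleTerm r a : GG m n).right = cycleFrom n r := by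
  simp [shuffleTerm]

theorem color_shuffleTerm (r a : ℕ) (i : Fin n) :
    color (shuffleTerm r a : GG m n) i = if (i : ℕ) = n - 1 then ofAdd (a : ZMod m) else 1 := by
  simp only [color, shuffleTerm, SemidirectProduct.mul_left, SemidirectProduct.mul_right,
    left_inr, right_inr, left_inl, right_inl, one_mul, mul_one]
  simp [wrAct]

theorem color_mul_shuffleTerm (g : GG m n) (r a : ℕ) (i : Fin n) :
    color (g * shuffleTerm r a) i =
      color g (cycleFrom n r i) * if (i : ℕ) = n - 1 then ofAdd (a : ZMod m) else 1 := by
  rw [color_mul, right_shuffleTerm, color_shuffleTerm]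

theorem insertAt_permSeq_mul_shuffleTerm (g : GG m n) {r i : ℕ} (a : ℕ) (hi : i < n) :
    insertAt (permSeq (g * shuffleTerm r a)) (permSeq (g * shuffleTerm r a) (n - 1)) r i =
      permSeq g i := by
  unfold insertAt
  split_ifs <;> rw [permSeq_mul_of_lt _ _ (by omega), right_shuffleTerm] <;> congr 1 <;>
    simp only [cycleFrom_apply_val] <;> split_ifs <;> omega

def IsSortedPrefix (w : ℕ) (g : GG m n) : Prop :=
  StrictMonoOn (permSeq g) (Set.Iio w) ∧ ∀ i : Fin n, (i : ℕ) < w → color g i = 1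

def FixesPrefix (w : ℕ) (u : GG m n) : Prop :=
  ∀ i : Fin n, (i : ℕ) < w → u.right i = i ∧ color u i = 1

theorem isSortedPrefix_mul_iff {w : ℕ} {u : GG m n} (hu : FixesPrefix w u) (g : GG m n) :
    IsSortedPrefix w (g * u) ↔ IsSortedPrefix w g := by
  have hseq : Set.EqOn (permSeq (g * u)) (permSeq g) (Set.Iio w) := fun i hi => by
    unfold permSeq
    split_ifs with h
    · simp [(hu ⟨i, h⟩ hi).1]
    · rfl
  rw [IsSortedPrefix, IsSortedPrefix, hseq.congr_strictMonoOn]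
  refine and_congr_right' (forall_congr' fun i => imp_congr_right fun hi => ?_)
  rw [color_mul, (hu i hi).1, (hu i hi).2, mul_one]

theorem fixesPrefix_shuffleTerm {w r : ℕ} (hwr : w ≤ r) (hr : r < n) (a : ℕ) :
    FixesPrefix w (shuffleTerm r a : GG m n) := by
  intro i hi
  refine ⟨Fin.ext ?_, ?_⟩
  · rw [right_shuffleTerm, cycleFrom_apply_val, if_pos (by omega)]
  · rw [color_shuffleTerm, if_neg (by omega)]

theorem IsSortedPrefix.mul_shuffleTerm {w r : ℕ} {g : GG m n} (hg : IsSortedPrefix (w + 1) g)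
    (hw : w < n) (hr : r ≤ w) (a : ℕ) : IsSortedPrefix w (g * shuffleTerm r a) := by
  refine ⟨fun i hi j hj hij => ?_, fun i hi => ?_⟩
  · rw [Set.mem_Iio] at hi hj
    rw [permSeq_mul_of_lt _ _ (by omega : i < n), permSeq_mul_of_lt _ _ (by omega : j < n),
      right_shuffleTerm]
    apply hg.1 <;> simp only [Set.mem_Iio, cycleFrom_apply_val] <;> split_ifs <;> omega
  · rw [color_mul_shuffleTerm, if_neg (by omega), mul_one]
    exact hg.2 _ (by rw [cycleFrom_apply_val]; split_ifs <;> omega)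

theorem IsSortedPrefix.color_mul_shuffleTerm_last {w r : ℕ} {g : GG m n}
    (hg : IsSortedPrefix (w + 1) g) (hr : r ≤ w) (a : ℕ) {i : Fin n} (hi : (i : ℕ) = n - 1) :
    color (g * shuffleTerm r a) i = ofAdd (a : ZMod m) := by
  rw [color_mul_shuffleTerm, if_pos hi,
    hg.2 _ (by rw [cycleFrom_apply_val]; split_ifs <;> omega), one_mul]

theorem IsSortedPrefix.strictMonoOn_insertAt {w r : ℕ} {g : GG m n}
    (hg : IsSortedPrefix (w + 1) g) (hw : w < n) (a : ℕ) :
    StrictMonoOn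
      (insertAt (permSeq (g * shuffleTerm r a)) (permSeq (g * shuffleTerm r a) (n - 1)) r)
      (Set.Iio (w + 1)) :=
  hg.1.congr fun i hi => (insertAt_permSeq_mul_shuffleTerm g a (by simp at hi; omega)).symm

theorem isSortedPrefix_of_mul_shuffleTerm {w r a : ℕ} {g : GG m n} (hw : w < n) (hr : r ≤ w)
    (hx : IsSortedPrefix w (g * shuffleTerm r a))
    (hins : StrictMonoOn
      (insertAt (permSeq (g * shuffleTerm r a)) (permSeq (g * shuffleTerm r a) (n - 1)) r)
      (Set.Iio (w + 1)))
    (hlast : ∀ i : Fin n, (i : ℕ) = n - 1 → color (g * shuffleTerm r a) i = ofAdd (a : ZMod m)) :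
    IsSortedPrefix (w + 1) g := by
  refine ⟨hins.congr fun i hi => insertAt_permSeq_mul_shuffleTerm g a (by simp at hi; omega),
    fun i hi => ?_⟩
  have key := color_mul_shuffleTerm g r a ((cycleFrom n r).symm i)
  rw [Equiv.apply_symm_apply] at key
  have hval := cycleFrom_symm_apply_val (n := n) r i
  rcases eq_or_ne (i : ℕ) r with hir | hir
  · have hj : ((cycleFrom n r).symm i : ℕ) = n - 1 := by rw [hval]; split_ifs <;> omega
    rw [hlast _ hj, if_pos hj] at key
    exact mul_eq_right.mp key.symm
  · rw [hx.2 _ (by rw [hval]; split_ifs <;> omega), if_neg (by rw [hval]; split_ifs <;> omega),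
      mul_one] at key
    exact key.symm

theorem isSortedPrefix_self_iff (g : GG m n) : IsSortedPrefix n g ↔ g = 1 := by
  refine ⟨fun hg => ?_, ?_⟩
  · have hmono : StrictMono g.right := fun i j hij => by
      simpa [permSeq] using hg.1 (Set.mem_Iio.2 i.2) (Set.mem_Iio.2 j.2) hij
    have hright : g.right = 1 := by
      have := Subsingleton.elim (hmono.orderIsoOfSurjective g.right g.right.surjective)
        (OrderIso.refl _)
      ext i
      exact congrArg (fun e : Fin n ≃o Fin n => (e i : ℕ)) this
    have hleft : g.left = 1 := funext fun i => by simpa [color, hright] using hg.2 i i.2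
    exact SemidirectProduct.ext hleft hright
  · rintro rfl
    refine ⟨fun i hi j hj hij => ?_, fun _ _ => rfl⟩
    simpa [permSeq, show i < n from hi, show j < n from hj] using hij

open Classical in
noncomputable def sortedPrefixSet (m n w : ℕ) [NeZero m] : Finset (GG m n) :=
  univ.filter (IsSortedPrefix w)

section Sums

variable [NeZero m]

@[simp] theorem mem_sortedPrefixSet {w : ℕ} {g : GG m n} :
    g ∈ sortedPrefixSet m n w ↔ IsSortedPrefix w g := by
  simp [sortedPrefixSet]

theorem sortedPrefixSet_self : sortedPrefixSet m n n = {1} := by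
  ext g
  simp [isSortedPrefix_self_iff]

theorem sortedPrefixSet_zero : sortedPrefixSet m n 0 = univ := by
  ext g
  simpa [IsSortedPrefix] using (Set.subsingleton_empty (α := ℕ)).strictMonoOn (f := permSeq g)

theorem sum_sortedPrefixSet_mul_of_fixesPrefix {w : ℕ} {u : GG m n} (hu : FixesPrefix w u) :
    (∑ g ∈ sortedPrefixSet m n w, MonoidAlgebra.of ℤ _ g) * MonoidAlgebra.of ℤ _ u =
      ∑ g ∈ sortedPrefixSet m n w, MonoidAlgebra.of ℤ _ g := by
  rw [sum_mul]
  refine sum_nbij' (· * u) (· * u⁻¹) (fun g hg => ?_) (fun g hg => ?_) (fun g _ => by simp)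
    (fun g _ => by simp) (fun g _ => (map_mul _ _ _).symm)
  · simpa [isSortedPrefix_mul_iff hu] using hg
  · simpa [← isSortedPrefix_mul_iff hu (g * u⁻¹)] using hg

theorem bijOn_mul_shuffleTerm {w : ℕ} (hw : w < n) :
    Set.BijOn (fun p : ℕ × ℕ × GG m n => p.2.2 * shuffleTerm p.1 p.2.1)
      ↑(range (w + 1) ×ˢ range m ×ˢ sortedPrefixSet m n (w + 1)) ↑(sortedPrefixSet m n w) := by
  refine ⟨fun ⟨r, a, g⟩ hp => ?_, fun ⟨r, a, g⟩ hp ⟨r', a', g'⟩ hp' hx => ?_, fun x hx => ?_⟩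
  · simp only [coe_product, Set.mem_prod, mem_coe, mem_range, mem_sortedPrefixSet] at hp ⊢
    exact hp.2.2.mul_shuffleTerm hw (by omega) a
  · simp only [coe_product, Set.mem_prod, mem_coe, mem_range, mem_sortedPrefixSet] at hp hp' hx
    obtain rfl : r = r' := eq_of_strictMonoOn_insertAt (by omega) (by omega)
      (hp.2.2.strictMonoOn_insertAt hw a) (hx ▸ hp'.2.2.strictMonoOn_insertAt hw a')
    have hlast : (ofAdd (a : ZMod m) : Cm m) = ofAdd (a' : ZMod m) := by
      rw [← hp.2.2.color_mul_shuffleTerm_last (r := r) (by omega) a (i := ⟨n - 1, by omega⟩) rfl,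
        hx, hp'.2.2.color_mul_shuffleTerm_last (r := r) (by omega) a' rfl]
    obtain rfl : a = a' := by
      have := (ZMod.natCast_eq_natCast_iff' a a' m).mp (ofAdd.injective hlast)
      rwa [Nat.mod_eq_of_lt hp.2.1, Nat.mod_eq_of_lt hp'.2.1] at this
    obtain rfl : g = g' := mul_right_cancel hx
    rfl
  · simp only [mem_coe, mem_sortedPrefixSet] at hx
    have hne : ∀ i < w, permSeq x i ≠ permSeq x (n - 1) := fun i hi h => by
      simp only [permSeq, dif_pos (show i < n by omega), dif_pos (show n - 1 < n by omega)] at h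
      exact absurd (Fin.mk.inj_iff.mp (x.right.injective (Fin.ext h))) (by omega)
    obtain ⟨r, hr, hins⟩ := exists_strictMonoOn_insertAt hx.1 hne
    set a := (toAdd (color x ⟨n - 1, by omega⟩)).val with ha
    have hlast : ∀ i : Fin n, (i : ℕ) = n - 1 → color x i = ofAdd (a : ZMod m) := by
      intro i hi
      rw [show i = ⟨n - 1, by omega⟩ from Fin.ext hi, ha, ZMod.natCast_zmod_val, ofAdd_toAdd]
    clear_value a
    obtain ⟨g, rfl⟩ : ∃ g, x = g * shuffleTerm r a := ⟨x * (shuffleTerm r a)⁻¹, by simp⟩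
    refine ⟨(r, a, g), ?_, rfl⟩
    simp only [coe_product, Set.mem_prod, mem_coe, mem_range, mem_sortedPrefixSet]
    exact ⟨by omega, ha ▸ ZMod.val_lt _, isSortedPrefix_of_mul_shuffleTerm hw hr hx hins hlast⟩

theorem sum_sortedPrefixSet_mul_msha {k : ℕ} (hk : k < n) :
    (∑ g ∈ sortedPrefixSet m n (n - k), MonoidAlgebra.of ℤ _ g) * msha m n n =
      ∑ g ∈ sortedPrefixSet m n (n - (k + 1)), MonoidAlgebra.of ℤ _ g +
        ((k * m : ℕ) : MonoidAlgebra ℤ (GG m n)) *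
          ∑ g ∈ sortedPrefixSet m n (n - k), MonoidAlgebra.of ℤ _ g := by
  set w := n - (k + 1)
  rw [show n - k = w + 1 by omega, msha_eq_sum_shuffleTerm, mul_sum,
    ← sum_range_add_sum_Ico _ (show w + 1 ≤ n by omega)]
  congr 1
  · have hbij := bijOn_mul_shuffleTerm (m := m) (show w < n by omega)
    rw [← sum_nbij _ hbij.mapsTo hbij.injOn hbij.surjOn fun _ _ => rfl, sum_product]
    refine sum_congr rfl fun r _ => ?_
    rw [sum_product, sum_mul_sum, sum_comm]
    simp only [map_mul]
  · have hfix : ∀ r ∈ Ico (w + 1) n,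
        (∑ g ∈ sortedPrefixSet m n (w + 1), MonoidAlgebra.of ℤ _ g) *
          ∑ a ∈ range m, MonoidAlgebra.of ℤ _ (shuffleTerm r a) =
        m • ∑ g ∈ sortedPrefixSet m n (w + 1), MonoidAlgebra.of ℤ _ g := fun r hr => by
      rw [mem_Ico] at hr
      rw [mul_sum, sum_congr rfl fun a _ => sum_sortedPrefixSet_mul_of_fixesPrefix
        (fixesPrefix_shuffleTerm (by omega) hr.2 a), sum_const, card_range]
    rw [sum_congr rfl hfix, sum_const, Nat.card_Ico, smul_smul, nsmul_eq_mul,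
      show n - (w + 1) = k by omega]

theorem prod_msha_sub_eq_sum_sortedPrefixSet {k : ℕ} (hk : k ≤ n) :
    ((List.range k).map fun i => msha m n n - ((i * m : ℕ) : MonoidAlgebra ℤ (GG m n))).prod =
      ∑ g ∈ sortedPrefixSet m n (n - k), MonoidAlgebra.of ℤ _ g := by
  induction k with
  | zero => simp [sortedPrefixSet_self, MonoidAlgebra.one_def]
  | succ k ih =>
    rw [List.range_succ, List.map_append, List.prod_append, ih (by omega), List.map_singleton,
      List.prod_singleton, mul_sub, sum_sortedPrefixSet_mul_msha hk, (Nat.cast_commute _ _).eq,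
      add_sub_cancel_right]

end Sums

end GG

/-- In `ℤ G(m,1,n)`, the product `∏_{i=0}^{n-1} (⁽ᵐ⁾Ш_{1,n-1} − i·m)`
equals the sum of all elements of the group `G(m,1,n)`. -/
theorem prod_msha_sub_eq_sum (m n : ℕ) [NeZero m] :
    (((List.range n).map (fun i => msha m n n - ((i * m : ℕ) : MonoidAlgebra ℤ (GG m n)))).prod) =
      ∑ g : GG m n, MonoidAlgebra.of ℤ (GG m n) g := by
  rw [GG.prod_msha_sub_eq_sum_sortedPrefixSet le_rfl, Nat.sub_self, GG.sortedPrefixSet_zero]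
end

section
/- The element ⁽ᵐ⁾Ш_{1,n-1} of ℤG(m,1,n) satisfies the polynomial identity ∏_{i=0}^{n} (⁽ᵐ⁾Ш_{1,n-1} − i·m) = 0; in particular left multiplication by ⁽ᵐ⁾Ш_{1,n-1} is annihilated by the polynomial ∏_{i=0}^{n}(X − im). -/
open Finset Multiplicative

/-!
Think of `g = (v, σ) ∈ G(m,1,n)` as a deck with card `σ i` at position `i`, twisted by `v (σ i)`,
and let `Σ_k` be the sum of the elements whose first `n - k` cards are untwisted and increasing,
so `Σ_0 = 1`. Expanding, `Ш` is the sum of the `n m` elements `c_{j,x} = s_j ⋯ s_{n-1} t_n^x`,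
whose permutation part is the cycle `(j j+1 ⋯ n)`. If card `j` lies at position `i` of `g`, then
`c_{j,x}⁻¹ g` is counted in `Σ_k` for every `x` when `i ≥ n - k`; exactly when `g` is counted in
`Σ_{k+1}` and `x` is the twist of card `j` when `i = n - k - 1`; and never when `i < n - k - 1`,
since card `j` becomes the largest card but is followed by another card of the prefix. Hence
`Ш Σ_k = k m Σ_k + Σ_{k+1}` for `k < n` and `Ш Σ_n = n m Σ_n`, so `∏_{i<k} (Ш - i m) = Σ_k` and
the last factor `Ш - n m` annihilates `Σ_n`.
-/

open Equiv SemidirectProduct MonoidAlgebra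

namespace Fin
variable {N : ℕ}

theorem cycleIcc_mul_swap {a b : Fin (N + 1)} (hab : a ≤ b) (hb : b < last N) :
    cycleIcc a b * swap b (b + 1) = cycleIcc a (b + 1) := by
  have hb1 : ((b + 1 : Fin (N + 1)) : ℕ) = b + 1 := val_add_one_of_lt hb
  ext x
  simp only [Perm.coe_mul, Function.comp_apply, swap_apply_def]
  grind [cycleIcc_of_lt, cycleIcc_of_gt, cycleIcc_of_le_of_le]

theorem cycleIcc_last_symm_self (j : Fin (N + 1)) : (cycleIcc j (last N)).symm j = last N := by
  rw [Equiv.symm_apply_eq, cycleIcc_of_last (le_last j)]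

theorem cycleIcc_last_symm_succAbove (j : Fin (N + 1)) (x : Fin N) :
    (cycleIcc j (last N)).symm (j.succAbove x) = x.castSucc := by
  rw [Equiv.symm_apply_eq, ← succAbove_last, ← Function.comp_apply (f := cycleIcc j (last N)),
    cycleIcc_comp_succAbove _ _ (le_last j)]

theorem cycleIcc_last_symm_lt_last {j p : Fin (N + 1)} (hp : p ≠ j) :
    (cycleIcc j (last N)).symm p < last N := by
  obtain ⟨p, rfl⟩ := exists_succAbove_eq hp
  rw [cycleIcc_last_symm_succAbove]
  exact castSucc_lt_last p

theorem cycleIcc_last_symm_lt_iff {j p q : Fin (N + 1)} (hp : p ≠ j) (hq : q ≠ j) :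
    (cycleIcc j (last N)).symm p < (cycleIcc j (last N)).symm q ↔ p < q := by
  obtain ⟨p, rfl⟩ := exists_succAbove_eq hp
  obtain ⟨q, rfl⟩ := exists_succAbove_eq hq
  rw [cycleIcc_last_symm_succAbove, cycleIcc_last_symm_succAbove, castSucc_lt_castSucc_iff,
    succAbove_lt_succAbove_iff]

end Fin

theorem ZMod.sum_range_natCast {M : Type*} [AddCommMonoid M] (m : ℕ) [NeZero m]
    (f : ZMod m → M) : ∑ a ∈ Finset.range m, f a = ∑ x, f x :=
  Finset.sum_nbij' (fun a => a) ZMod.val (by simp) (by simp [ZMod.val_lt])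
    (fun a ha => ZMod.val_cast_of_lt (Finset.mem_range.mp ha)) (by simp) (by simp)

theorem MonoidAlgebra.coeff_sum_filter_of {R G : Type*} [Semiring R] [Monoid G] [Fintype G]
    (p : G → Prop) [DecidablePred p] (g : G) :
    (∑ h with p h, of R G h).coeff g = if p g then 1 else 0 := by
  classical
  simp_rw [coeff_sum, Finset.sum_apply', of_apply, coeff_single, Finsupp.single_apply,
    Finset.sum_ite_eq', Finset.mem_filter, Finset.mem_univ, true_and]

theorem Fin.sum_ite_le_add {M : Type*} [AddCommMonoid M] {n k : ℕ} (hk : k ≤ n) (a b : M) :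
    ∑ i : Fin n, (if n ≤ i + k then a else if i + (k + 1) = n then b else 0) =
      k • a + if k < n then b else 0 := by
  obtain ⟨r, rfl⟩ := Nat.exists_eq_add_of_le' hk
  rw [Fin.sum_univ_eq_sum_range (fun i => if r + k ≤ i + k then a else
    if i + (k + 1) = r + k then b else 0), Finset.sum_range_add, add_comm]
  congr 1
  · simp
  · cases r with
    | zero => simp
    | succ r =>
      rw [Finset.sum_range_succ, Finset.sum_eq_zero fun i hi => ?_]
      · simp [show r + (k + 1) = r + 1 + k by omega]
      · simp only [Finset.mem_range] at hi
        rw [if_neg (by omega), if_neg (by omega)]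

theorem List.prod_range_succ_map_sub_natCast {R : Type*} [Ring R] (x : R) (c : ℕ → ℕ) (k : ℕ) :
    ((List.range (k + 1)).map fun i => x - (c i : R)).prod =
      (x - c k) * ((List.range k).map fun i => x - (c i : R)).prod := by
  have hcomm : Commute (x - c k) ((List.range k).map fun i => x - (c i : R)).prod :=
    Commute.list_prod_right _ _ fun y hy => by
      obtain ⟨i, -, rfl⟩ := List.mem_map.mp hy
      exact ((Commute.refl x).sub_right (Nat.commute_cast x _)).sub_left
        ((Nat.cast_commute _ x).sub_right (Nat.cast_commute _ _))
  rw [List.prod_range_succ, hcomm.eq]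

section WreathProduct

variable {m N : ℕ}

theorem wrAct_mulSingle {n : ℕ} (π : Perm (Fin n)) (i : Fin n) (x : Cm m) :
    wrAct m n π (Pi.mulSingle i x) = Pi.mulSingle (π i) x := by
  change Pi.mulSingle i x ∘ π.symm = _
  rw [Pi.mulSingle_comp_equiv, symm_symm]

theorem prod_sGen (a l : ℕ) (h : a + l ≤ N) :
    ((List.range l).map fun p => sGen m (N + 1) (a + p)).prod =
      inr (Fin.cycleIcc ⟨a, by omega⟩ ⟨a + l, by omega⟩) := by
  induction l with
  | zero =>
    simp only [List.range_zero, List.map_nil, List.prod_nil, Nat.add_zero, Fin.cycleIcc_eq, map_one]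
  | succ l ih =>
    rw [List.range_succ, List.map_append, List.prod_append, ih (by omega), List.map_singleton,
      List.prod_singleton, sGen, dif_pos (by omega), ← map_mul]
    have hsucc : (⟨a + l + 1, by omega⟩ : Fin (N + 1)) = ⟨a + l, by omega⟩ + 1 :=
      Fin.ext (Fin.val_add_one_of_lt (Fin.mk_lt_mk.mpr (by omega : a + l < N))).symm
    simp only [← add_assoc, hsucc]
    rw [Fin.cycleIcc_mul_swap (Fin.mk_le_mk.mpr (by omega)) (Fin.mk_lt_mk.mpr (by omega))]

def insertLast (j : Fin (N + 1)) (x : Cm m) : GG m (N + 1) :=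
  ⟨Pi.mulSingle j x, Fin.cycleIcc j (Fin.last N)⟩

@[simp]
theorem insertLast_left (j : Fin (N + 1)) (x : Cm m) : (insertLast j x).left = Pi.mulSingle j x :=
  rfl

@[simp]
theorem insertLast_right (j : Fin (N + 1)) (x : Cm m) :
    (insertLast j x).right = Fin.cycleIcc j (Fin.last N) :=
  rfl

theorem sum_range_of_prod_sGen :
    ∑ l ∈ Finset.range (N + 1), of ℤ (GG m (N + 1))
        ((List.range l).map fun p => sGen m (N + 1) (N + 1 - 1 - l + p)).prod =
      ∑ j, of ℤ _ (inr (Fin.cycleIcc j (Fin.last N))) := by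
  rw [← Fin.sum_univ_eq_sum_range, ← Equiv.sum_comp Fin.revPerm]
  refine Finset.sum_congr rfl fun j _ => ?_
  have hj := j.is_le
  have hidx : ∀ p, N + 1 - 1 - (N + 1 - (j + 1)) + p = j + p := fun p => by omega
  simp only [Fin.revPerm_apply, Fin.val_rev, hidx]
  rw [prod_sGen j (N + 1 - (j + 1)) (by omega)]
  congr 3
  exact Fin.ext (by simp only [Fin.val_last]; omega)

theorem sum_range_of_tGen_pow [NeZero m] :
    ∑ a ∈ Finset.range m, of ℤ (GG m (N + 1)) (tGen m (N + 1) (N + 1 - 1) ^ a) =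
      ∑ x, of ℤ _ (inl (Pi.mulSingle (Fin.last N) x)) := by
  have ht : tGen m (N + 1) (N + 1 - 1) = inl (Pi.mulSingle (Fin.last N) (ofAdd 1)) := by
    rw [tGen, dif_pos (by omega)]
    rfl
  simp_rw [ht, ← map_pow, ← Pi.mulSingle_pow, ← ofAdd_nsmul, nsmul_one]
  rw [ZMod.sum_range_natCast m fun z =>
    of ℤ (GG m (N + 1)) (inl (Pi.mulSingle (Fin.last N) (ofAdd z : Cm m)))]
  exact Multiplicative.ofAdd.sum_comp fun x =>
    of ℤ (GG m (N + 1)) (inl (Pi.mulSingle (Fin.last N) x))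

theorem msha_eq_sum_insertLast [NeZero m] :
    msha m (N + 1) (N + 1) = ∑ j, ∑ x, of ℤ _ (insertLast j x) := by
  rw [msha, sum_range_of_prod_sGen, sum_range_of_tGen_pow, Finset.sum_mul_sum]
  refine Finset.sum_congr rfl fun j _ => Finset.sum_congr rfl fun x _ => ?_
  rw [← map_mul]
  congr 1
  ext
  · simp [insertLast, wrAct_mulSingle, Fin.cycleIcc_of_last (Fin.le_last j)]
  · simp [insertLast]

theorem msha_self_eq_zero {m n : ℕ} (h : m = 0 ∨ n = 0) : msha m n n = 0 := by
  rcases h with rfl | rfl <;> simp [msha]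

end WreathProduct

section SortedPrefix

variable {m n N : ℕ}

def SortedPrefix (k : ℕ) (g : GG m n) : Prop :=
  StrictMonoOn g.right {i | (i : ℕ) + k < n} ∧
    ∀ i ∈ {i : Fin n | (i : ℕ) + k < n}, g.left (g.right i) = 1

open scoped Classical in
noncomputable def sortedPrefixSum (m n k : ℕ) [NeZero m] : MonoidAlgebra ℤ (GG m n) :=
  ∑ g with SortedPrefix k g, of ℤ _ g

theorem sortedPrefix_inv_mul_iff {k : ℕ} (c g : GG m n) :
    SortedPrefix k (c⁻¹ * g) ↔
      StrictMonoOn (c.right.symm ∘ g.right) {i | (i : ℕ) + k < n} ∧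
        ∀ i ∈ {i : Fin n | (i : ℕ) + k < n}, c.left (g.right i) = g.left (g.right i) := by
  have hright : (c⁻¹ * g).right = c.right.symm ∘ g.right := by
    ext i; simp [Perm.inv_def]
  have hleft (i : Fin n) :
      (c⁻¹ * g).left ((c⁻¹ * g).right i) = (c.left (g.right i))⁻¹ * g.left (g.right i) := by
    simp [wrAct, Perm.inv_def]
  simp only [SortedPrefix, hleft, inv_mul_eq_one]
  rw [hright]

theorem strictMonoOn_cycleIcc_last_symm_comp_iff {α : Type*} [Preorder α] {s : Set α}
    {f : α → Fin (N + 1)} {j : Fin (N + 1)} (hf : ∀ a ∈ s, f a ≠ j) :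
    StrictMonoOn ((Fin.cycleIcc j (Fin.last N)).symm ∘ f) s ↔ StrictMonoOn f s :=
  forall₂_congr fun a ha => forall₂_congr fun b hb => imp_congr_right fun _ =>
    Fin.cycleIcc_last_symm_lt_iff (hf a ha) (hf b hb)

theorem sortedPrefix_zero_iff {g : GG m n} : SortedPrefix 0 g ↔ g = 1 := by
  have huniv : {i : Fin n | (i : ℕ) + 0 < n} = Set.univ := Set.eq_univ_of_forall fun i => by
    simp
  rw [SortedPrefix, huniv, strictMonoOn_univ]
  constructor
  · rintro ⟨hmono, huntwisted⟩
    have hright : g.right = 1 := Equiv.ext fun i => congrFun hmono.eq_id i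
    refine SemidirectProduct.ext (funext fun c => ?_) hright
    simpa [hright] using huntwisted c (Set.mem_univ c)
  · rintro rfl
    exact ⟨strictMono_id, fun _ _ => rfl⟩

variable {k : ℕ} {j i₀ : Fin (N + 1)} {x : Cm m} {g : GG m (N + 1)}

theorem sortedPrefix_inv_insertLast_mul_iff_of_le (hi₀ : g.right i₀ = j)
    (h : N + 1 ≤ i₀ + k) : SortedPrefix k ((insertLast j x)⁻¹ * g) ↔ SortedPrefix k g := by
  have hne : ∀ i ∈ {i : Fin (N + 1) | (i : ℕ) + k < N + 1}, g.right i ≠ j :=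
    fun i hi => hi₀ ▸ g.right.injective.ne (by rintro rfl; exact absurd hi (by simpa using h))
  rw [sortedPrefix_inv_mul_iff, SortedPrefix, insertLast_right, insertLast_left,
    strictMonoOn_cycleIcc_last_symm_comp_iff hne]
  refine and_congr_right' (forall₂_congr fun i hi => ?_)
  rw [Pi.mulSingle_eq_of_ne (hne i hi), eq_comm]

theorem sortedPrefix_inv_insertLast_mul_iff_of_eq (hi₀ : g.right i₀ = j)
    (h : i₀ + (k + 1) = N + 1) :
    SortedPrefix k ((insertLast j x)⁻¹ * g) ↔ SortedPrefix (k + 1) g ∧ x = g.left j := by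
  set S := {i : Fin (N + 1) | (i : ℕ) + (k + 1) < N + 1}
  have hS : {i : Fin (N + 1) | (i : ℕ) + k < N + 1} = insert i₀ S := by
    ext i
    simp only [Set.mem_ofPred_eq, Set.mem_insert_iff, S, Fin.ext_iff]
    omega
  have hne : ∀ i ∈ S, g.right i ≠ j := fun i hi =>
    hi₀ ▸ g.right.injective.ne (by rintro rfl; simp only [S, Set.mem_ofPred_eq] at hi; omega)
  have hle : ∀ i ∈ S, i ≤ i₀ := fun i hi =>
    Fin.le_iff_val_le_val.mpr (by simp only [S, Set.mem_ofPred_eq] at hi; omega)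
  have htop : ∀ i ∈ S, i < i₀ → (Fin.cycleIcc j (Fin.last N)).symm (g.right i) <
      (Fin.cycleIcc j (Fin.last N)).symm (g.right i₀) := fun i hi _ => by
    rw [hi₀, Fin.cycleIcc_last_symm_self]
    exact Fin.cycleIcc_last_symm_lt_last (hne i hi)
  have htwist :
      (∀ i ∈ S, (Pi.mulSingle j x : Fin (N + 1) → Cm m) (g.right i) = g.left (g.right i)) ↔
        ∀ i ∈ S, g.left (g.right i) = 1 :=
    forall₂_congr fun i hi => by rw [Pi.mulSingle_eq_of_ne (hne i hi), eq_comm]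
  rw [sortedPrefix_inv_mul_iff, insertLast_left, insertLast_right, hS,
    strictMonoOn_insert_iff_of_forall_le hle, strictMonoOn_cycleIcc_last_symm_comp_iff hne,
    Set.forall_mem_insert, hi₀, Pi.mulSingle_eq_same, htwist, SortedPrefix]
  simp only [Function.comp_apply]
  tauto

theorem not_sortedPrefix_inv_insertLast_mul_of_lt (hi₀ : g.right i₀ = j)
    (h : i₀ + (k + 1) < N + 1) : ¬ SortedPrefix k ((insertLast j x)⁻¹ * g) := by
  intro hsorted
  set i₁ : Fin (N + 1) := ⟨i₀ + 1, by omega⟩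
  have hmono := ((sortedPrefix_inv_mul_iff _ _).mp hsorted).1
    (show i₀ ∈ {i : Fin (N + 1) | (i : ℕ) + k < N + 1} by simp only [Set.mem_ofPred_eq]; omega)
    (show i₁ ∈ {i : Fin (N + 1) | (i : ℕ) + k < N + 1} by simp only [i₁, Set.mem_ofPred_eq]; omega)
    (Fin.lt_def.mpr (by simp [i₁]))
  simp only [Function.comp_apply, insertLast_right, hi₀, Fin.cycleIcc_last_symm_self] at hmono
  exact lt_asymm hmono
    (Fin.cycleIcc_last_symm_lt_last (hi₀ ▸ g.right.injective.ne (by simp [i₁, Fin.ext_iff])))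

end SortedPrefix

section Counting

open scoped Classical

variable {m N k : ℕ} [NeZero m]

theorem sum_sortedPrefix_inv_insertLast_mul {j i₀ : Fin (N + 1)} {g : GG m (N + 1)}
    (hi₀ : g.right i₀ = j) :
    ∑ x : Cm m, (if SortedPrefix k ((insertLast j x)⁻¹ * g) then 1 else 0 : ℤ) =
      if N + 1 ≤ i₀ + k then (m : ℤ) * if SortedPrefix k g then 1 else 0
      else if i₀ + (k + 1) = N + 1 then if SortedPrefix (k + 1) g then 1 else 0 else 0 := by
  by_cases hA : N + 1 ≤ i₀ + k
  · simp_rw [if_pos hA, sortedPrefix_inv_insertLast_mul_iff_of_le hi₀ hA, Finset.sum_const,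
      Finset.card_univ, Fintype.card_multiplicative, ZMod.card, nsmul_eq_mul]
  by_cases hB : i₀ + (k + 1) = N + 1
  · simp_rw [if_neg hA, if_pos hB, sortedPrefix_inv_insertLast_mul_iff_of_eq hi₀ hB, ite_and]
    split_ifs <;> simp
  · simp [hA, hB, not_sortedPrefix_inv_insertLast_mul_of_lt (k := k) hi₀ (by omega)]

theorem msha_mul_sortedPrefixSum (hk : k ≤ N + 1) :
    msha m (N + 1) (N + 1) * sortedPrefixSum m (N + 1) k =
      ((k * m : ℕ) : MonoidAlgebra ℤ (GG m (N + 1))) * sortedPrefixSum m (N + 1) k +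
        if k < N + 1 then sortedPrefixSum m (N + 1) (k + 1) else 0 := by
  ext g
  have hcoeff (x : GG m (N + 1)) (l : ℕ) : (of ℤ _ x * sortedPrefixSum m (N + 1) l).coeff g =
      if SortedPrefix l (x⁻¹ * g) then 1 else 0 := by
    rw [of_apply, coeff_single_mul_apply, one_mul, sortedPrefixSum, coeff_sum_filter_of]
  rw [msha_eq_sum_insertLast, Finset.sum_mul]
  simp_rw [Finset.sum_mul, coeff_sum, Finset.sum_apply', hcoeff]
  rw [← Equiv.sum_comp g.right,
    Finset.sum_congr rfl fun i _ => sum_sortedPrefix_inv_insertLast_mul rfl, Fin.sum_ite_le_add hk]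
  rw [coeff_add, Finsupp.add_apply, natCast_def, coeff_single_mul_apply, inv_one, one_mul,
    apply_ite (fun x : MonoidAlgebra ℤ (GG m (N + 1)) => x.coeff g), coeff_zero]
  simp only [sortedPrefixSum, coeff_sum_filter_of, nsmul_eq_mul, Nat.cast_mul, mul_assoc,
    Finsupp.coe_zero, Pi.zero_apply]

end Counting

section ProductFormula

variable {m N : ℕ} [NeZero m]

theorem sortedPrefixSum_zero {n : ℕ} : sortedPrefixSum m n 0 = 1 := by
  classical
  simp_rw [sortedPrefixSum, sortedPrefix_zero_iff, Finset.filter_eq', Finset.mem_univ, if_true,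
    Finset.sum_singleton, map_one]

theorem prod_range_msha_sub_eq_sortedPrefixSum {k : ℕ} (hk : k ≤ N + 1) :
    ((List.range k).map fun i =>
        msha m (N + 1) (N + 1) - ((i * m : ℕ) : MonoidAlgebra ℤ (GG m (N + 1)))).prod =
      sortedPrefixSum m (N + 1) k := by
  induction k with
  | zero => simp [sortedPrefixSum_zero]
  | succ k ih =>
    rw [List.prod_range_succ_map_sub_natCast, ih (by omega), sub_mul,
      msha_mul_sortedPrefixSum (by omega), if_pos (by omega), add_sub_cancel_left]

end ProductFormula

/-- The element `⁽ᵐ⁾Ш_{1,n-1}` of `ℤ G(m,1,n)` satisfies the polynomial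
identity `∏_{i=0}^{n} (⁽ᵐ⁾Ш_{1,n-1} − i·m) = 0`; in particular, left multiplication by
`⁽ᵐ⁾Ш_{1,n-1}` is annihilated by the polynomial `∏_{i=0}^{n} (X − im)`. -/
theorem prod_msha_sub_eq_zero (m n : ℕ) :
    (((List.range (n + 1)).map
        (fun i => msha m n n - ((i * m : ℕ) : MonoidAlgebra ℤ (GG m n)))).prod) = 0 := by
  by_cases hdeg : m = 0 ∨ n = 0
  · simp [List.range_succ_eq_map, msha_self_eq_zero hdeg]
  obtain ⟨N, rfl⟩ := Nat.exists_eq_succ_of_ne_zero (by omega : n ≠ 0)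
  have : NeZero m := ⟨by omega⟩
  rw [List.prod_range_succ_map_sub_natCast, prod_range_msha_sub_eq_sortedPrefixSum le_rfl,
    sub_mul, msha_mul_sortedPrefixSum le_rfl, if_neg (lt_irrefl _), add_zero, sub_self]
end

section
/- In ℚG(m,1,n), define B_a for 0 ≤ a ≤ n as the sum over all ways of shuffling an arbitrary element of G(m,1,a) (as an a-deck of m-cards) into the fixed ordered deck ((a+1,1),…,(n,1)). Then B_{a+1} = (B_1 − a·m)·B_a for 0 ≤ a ≤ n−1, and hence B_a = B_1(B_1 − m)(B_1 − 2m)⋯(B_1 − (a−1)m). -/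
open Finset Multiplicative

/-- `g ∈ G(m,1,n)` is a deck obtained by shuffling an arbitrary `a`-deck of `m`-cards into
the fixed ordered untwisted deck `((a+1,1),…,(n,1))`: every card `c ≥ a` is untwisted and
the positions of the cards `a, a+1, …, n-1` (0-indexed) in the deck appear in increasing
order.  (Position `j` of the deck of `g = (ρ,σ)` holds the card `(σ j, ρ(σ j))`, so card `c`
has twist `ρ(c)` and sits at position `σ⁻¹ c`.) -/
def IsShuffleOfTail {m n : ℕ} (a : ℕ) (g : GG m n) : Prop :=
  (∀ c : Fin n, a ≤ (c : ℕ) → g.left c = 1) ∧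
  (∀ c c' : Fin n, a ≤ (c : ℕ) → c < c' → g.right⁻¹ c < g.right⁻¹ c')

instance {m n : ℕ} (a : ℕ) (g : GG m n) : Decidable (IsShuffleOfTail a g) :=
  inferInstanceAs (Decidable (_ ∧ _))

/-- `B_a ∈ ℚ G(m,1,n)`: the sum over all ways of shuffling an arbitrary element of
`G(m,1,a)` (as an `a`-deck of `m`-cards) into the fixed deck `((a+1,1),…,(n,1))`. -/
noncomputable def B (m n : ℕ) [NeZero m] (a : ℕ) : MonoidAlgebra ℚ (GG m n) :=
  ∑ g ∈ Finset.univ.filter (fun g : GG m n => IsShuffleOfTail a g),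
    MonoidAlgebra.of ℚ (GG m n) g

/-!
The summands of `B 1` are the decks `insertCard p t`, so the coefficient of `π` in `B 1 * B a`
counts the pairs `(p, t)` for which `(insertCard p t)⁻¹ * π` is a shuffle of the tail from `a`.
Multiplying by `(insertCard p t)⁻¹` relabels the cards by the cycle `(0 1 … p)`. If `p < a`, the
tail is untouched and the condition just says that `π` is a shuffle of the tail from `a`: this
gives `a * m` copies of `B a`. If `p ≥ a`, card `0` joins the tail, and the condition says that
`π` is a shuffle of the tail from `a + 1`, that `t` is the twist of card `0` in `π`, and that `p`
is the one slot where card `0` fits into the increasing tail: this gives `B (a + 1)`. The product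
formula follows by induction, all factors being polynomials in `B 1`.
-/

open MonoidAlgebra

namespace Fin

variable {n : ℕ}

theorem coe_cycleRange (p c : Fin n) :
    (p.cycleRange c : ℕ) = if c < p then (c : ℕ) + 1 else if c = p then 0 else (c : ℕ) := by
  rcases lt_trichotomy c p with h | rfl | h
  · rw [coe_cycleRange_of_lt h, if_pos h]
  · rw [coe_cycleRange_of_le le_rfl]
    simp
  · rw [cycleRange_of_gt h, if_neg (not_lt.2 h.le), if_neg h.ne']

theorem cycleRange_eq_zero_iff [NeZero n] {p c : Fin n} : p.cycleRange c = 0 ↔ c = p := by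
  rw [← Equiv.eq_symm_apply, cycleRange_symm_zero]

theorem strictMonoOn_cycleRange (p : Fin n) : StrictMonoOn p.cycleRange {p}ᶜ := by
  intro c hc c' hc' h
  simp only [Set.mem_compl_iff, Set.mem_singleton_iff] at hc hc'
  rw [Fin.lt_def, coe_cycleRange, coe_cycleRange]
  split_ifs <;> omega

theorem cycleRange_le_self_iff {p c : Fin n} (h : c ≠ p) : p.cycleRange c ≤ p ↔ c < p := by
  rw [Fin.le_def, coe_cycleRange]
  split_ifs <;> omega

theorem le_of_lt_cycleRange {a : ℕ} {p c : Fin n} (h : a < p.cycleRange c) : a ≤ c := by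
  rw [coe_cycleRange] at h
  split_ifs at h <;> omega

theorem lt_cycleRange {a : ℕ} {p c : Fin n} (hap : a ≤ p) (hac : a ≤ c) (h : c ≠ p) :
    a < p.cycleRange c := by
  rw [coe_cycleRange]
  split_ifs <;> omega

theorem forall_cycleRange_apply_iff [NeZero n] {a : ℕ} {p : Fin n} (hap : a ≤ p)
    {P : Fin n → Prop} :
    (∀ c : Fin n, a ≤ c → P (p.cycleRange c)) ↔ P 0 ∧ ∀ d : Fin n, a < d → P d := by
  refine ⟨fun h => ⟨?_, fun d hd => ?_⟩, fun ⟨h0, h⟩ c hc => ?_⟩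
  · simpa [cycleRange_self] using h p hap
  · simpa using h _ (le_of_lt_cycleRange (p := p) (c := p.cycleRange.symm d) (by simpa using hd))
  · by_cases hcp : c = p
    · simpa [hcp] using h0
    · exact h _ (lt_cycleRange hap hc hcp)

end Fin

section InsertionPoint

variable {n : ℕ} [NeZero n] {β : Type*} [LinearOrder β]

/-- With `q` giving the positions of the cards, `p` is the slot of card `0` among the tail cards
`a + 1, a + 2, …`. -/
def IsInsertionPoint (q : Fin n → β) (a : ℕ) (p : Fin n) : Prop :=
  a ≤ p ∧ ∀ c : Fin n, a < c → (q c < q 0 ↔ c ≤ p)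

instance (q : Fin n → β) (a : ℕ) (p : Fin n) : Decidable (IsInsertionPoint q a p) :=
  inferInstanceAs (Decidable (_ ∧ _))

theorem IsInsertionPoint.le {q : Fin n → β} {a : ℕ} {p p' : Fin n}
    (hp : IsInsertionPoint q a p) (hp' : IsInsertionPoint q a p') : p' ≤ p := by
  by_contra! h
  have ha : a < (p' : ℕ) := hp.1.trans_lt h
  exact h.not_ge ((hp.2 p' ha).1 ((hp'.2 p' ha).2 le_rfl))

theorem exists_isInsertionPoint {q : Fin n → β} {a : ℕ} (ha : a < n)
    (hq : StrictMonoOn q {c | a + 1 ≤ (c : ℕ)}) : ∃ p, IsInsertionPoint q a p := by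
  let S := univ.filter fun c : Fin n => a = c ∨ (a < c ∧ q c < q 0)
  have haS : (⟨a, ha⟩ : Fin n) ∈ S := by simp [S]
  have hS : S.Nonempty := ⟨_, haS⟩
  refine ⟨S.max' hS, S.le_max' _ haS, fun c hc => ⟨fun h => S.le_max' c (by simp [S, hc, h]),
    fun h => ?_⟩⟩
  rcases (mem_filter.1 (S.max'_mem hS)).2 with h' | h'
  · exact absurd (Fin.le_def.1 h) (by omega)
  · exact (hq.monotoneOn hc h'.1 h).trans_lt h'.2

theorem existsUnique_isInsertionPoint {q : Fin n → β} {a : ℕ} (ha : a < n)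
    (hq : StrictMonoOn q {c | a + 1 ≤ (c : ℕ)}) : ∃! p, IsInsertionPoint q a p :=
  (exists_isInsertionPoint ha hq).elim fun p hp =>
    ⟨p, hp, fun _ hp' => le_antisymm (hp.le hp') (hp'.le hp)⟩

theorem strictMonoOn_comp_cycleRange_iff {q : Fin n → β} (hq : Function.Injective q) {a : ℕ}
    {p : Fin n} (hap : a ≤ p) :
    StrictMonoOn (q ∘ p.cycleRange) {c | a ≤ (c : ℕ)} ↔
      StrictMonoOn q {c | a + 1 ≤ (c : ℕ)} ∧ IsInsertionPoint q a p := by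
  have hcyc := Fin.strictMonoOn_cycleRange p
  constructor
  · intro h
    have hsymm : Set.MapsTo p.cycleRange.symm {d | a + 1 ≤ (d : ℕ)} {c | a ≤ (c : ℕ)} :=
      fun d hd => Fin.le_of_lt_cycleRange (p := p) (by simpa using hd)
    have hne {d : Fin n} (hd : a < (d : ℕ)) : p.cycleRange.symm d ≠ p := fun e => by
      rw [Equiv.symm_apply_eq, Fin.cycleRange_self] at e
      simp [e] at hd
    refine ⟨fun d hd d' hd' hdd' => ?_, hap, fun d hd => ?_⟩
    · have := (hcyc.lt_iff_lt (hne hd) (hne hd')).1 (by simpa using hdd')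
      simpa using h (hsymm hd) (hsymm hd') this
    · calc q d < q 0 ↔ (q ∘ p.cycleRange) (p.cycleRange.symm d) < (q ∘ p.cycleRange) p := by
            simp [Fin.cycleRange_self]
        _ ↔ p.cycleRange.symm d < p := h.lt_iff_lt (hsymm hd) hap
        _ ↔ p.cycleRange (p.cycleRange.symm d) ≤ p := (Fin.cycleRange_le_self_iff (hne hd)).symm
        _ ↔ d ≤ p := by simp
  · rintro ⟨hmono, -, hsplit⟩ c hc c' hc' hlt
    simp only [Function.comp_apply]
    by_cases hc'p : c' = p
    · subst hc'p
      rw [Fin.cycleRange_self]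
      exact (hsplit _ (Fin.lt_cycleRange hap hc hlt.ne)).2
        ((Fin.cycleRange_le_self_iff hlt.ne).2 hlt)
    by_cases hcp : c = p
    · subst hcp
      rw [Fin.cycleRange_self]
      have hd := Fin.lt_cycleRange hap hc' hc'p
      refine lt_of_le_of_ne (not_lt.1 fun h => ?_) (hq.ne ?_)
      · exact ((Fin.cycleRange_le_self_iff hc'p).1 ((hsplit _ hd).1 h)).not_gt hlt
      · exact Ne.symm (Fin.cycleRange_eq_zero_iff.not.2 hc'p)
    · exact hmono (Fin.lt_cycleRange hap hc hcp) (Fin.lt_cycleRange hap hc' hc'p)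
        (hcyc hcp hc'p hlt)

end InsertionPoint

section Shuffles

variable {m n : ℕ}

theorem isShuffleOfTail_iff {a : ℕ} {g : GG m n} :
    IsShuffleOfTail a g ↔
      (∀ c : Fin n, a ≤ (c : ℕ) → g.left c = 1) ∧ StrictMonoOn ⇑g.right⁻¹ {c | a ≤ (c : ℕ)} :=
  and_congr_right' ⟨fun h _ hc _ _ hlt => h _ _ hc hlt,
    fun h _ _ hc hlt => h hc (hc.trans (Fin.le_def.1 hlt.le)) hlt⟩

theorem isShuffleOfTail_zero_iff {g : GG m n} : IsShuffleOfTail 0 g ↔ g = 1 := by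
  refine ⟨fun h => ?_, fun h => ?_⟩
  · have hr : g.right⁻¹ = 1 :=
      Equiv.ext fun c => StrictMono.apply_eq fun c c' => h.2 c c' (Nat.zero_le _)
    exact SemidirectProduct.ext (funext fun c => h.1 c (Nat.zero_le _)) (inv_eq_one.1 hr)
  · subst h
    exact ⟨fun _ _ => rfl, fun _ _ _ h => h⟩

theorem left_inv_mul_apply (h π : GG m n) (c : Fin n) :
    (h⁻¹ * π).left c = (h.left (h.right c))⁻¹ * π.left (h.right c) :=
  rfl

theorem coe_inv_right_inv_mul (h π : GG m n) :
    ⇑(h⁻¹ * π).right⁻¹ = ⇑π.right⁻¹ ∘ ⇑h.right := by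
  ext c
  simp [SemidirectProduct.mul_right, mul_inv_rev, Equiv.Perm.mul_apply]

variable [NeZero n]

/-- The deck with card `0`, twisted by `t`, moved to position `p`, all other cards untwisted and
in order. -/
@[simps]
def insertCard (p : Fin n) (t : Cm m) : GG m n :=
  ⟨Pi.mulSingle 0 t, p.cycleRange⟩

theorem insertCard_injective :
    Function.Injective fun pt : Fin n × Cm m => insertCard pt.1 pt.2 := by
  rintro ⟨p, t⟩ ⟨p', t'⟩ h
  have hr := congrArg (fun g : GG m n => g.right.symm 0) h
  have hl := congrArg (fun g : GG m n => g.left 0) h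
  simp only [insertCard_left, insertCard_right, Fin.cycleRange_symm_zero, Pi.mulSingle_eq_same]
    at hr hl
  exact Prod.ext hr hl

theorem isShuffleOfTail_insertCard_inv_mul_of_lt {a : ℕ} {p : Fin n} (t : Cm m) (π : GG m n)
    (hpa : (p : ℕ) < a) :
    IsShuffleOfTail a ((insertCard p t)⁻¹ * π) ↔ IsShuffleOfTail a π := by
  have hfix {c : Fin n} (hc : a ≤ (c : ℕ)) : p.cycleRange c = c :=
    Fin.cycleRange_of_gt (Fin.lt_def.2 (by omega))
  have hne {c : Fin n} (hc : a ≤ (c : ℕ)) : c ≠ 0 := fun e => by simp [e] at hc; omega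
  rw [isShuffleOfTail_iff, isShuffleOfTail_iff, coe_inv_right_inv_mul]
  refine and_congr (forall₂_congr fun c hc => ?_) ⟨fun h => h.congr fun c hc => ?_,
    fun h => h.congr fun c hc => ?_⟩
  · rw [left_inv_mul_apply]
    simp [hfix hc, Pi.mulSingle_eq_of_ne (hne hc)]
  all_goals simp [hfix hc]

theorem isShuffleOfTail_insertCard_inv_mul_of_le {a : ℕ} {p : Fin n} (t : Cm m) (π : GG m n)
    (hap : a ≤ (p : ℕ)) :
    IsShuffleOfTail a ((insertCard p t)⁻¹ * π) ↔
      IsShuffleOfTail (a + 1) π ∧ π.left 0 = t ∧ IsInsertionPoint ⇑π.right⁻¹ a p := by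
  have hleft : (∀ c : Fin n, a ≤ (c : ℕ) → ((insertCard p t)⁻¹ * π).left c = 1) ↔
      (∀ c : Fin n, a + 1 ≤ (c : ℕ) → π.left c = 1) ∧ π.left 0 = t := by
    simp only [left_inv_mul_apply, insertCard_right]
    refine (Fin.forall_cycleRange_apply_iff hap
      (P := fun d => ((insertCard p t).left d)⁻¹ * π.left d = 1)).trans ?_
    rw [and_comm]
    refine and_congr (forall₂_congr fun d hd => ?_) ?_
    · have hd0 : d ≠ 0 := fun e => by simp [e] at hd
      simp [Pi.mulSingle_eq_of_ne hd0]
    · rw [insertCard_left, Pi.mulSingle_eq_same, inv_mul_eq_one, eq_comm]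
  rw [isShuffleOfTail_iff, isShuffleOfTail_iff, hleft, coe_inv_right_inv_mul, insertCard_right,
    strictMonoOn_comp_cycleRange_iff π.right⁻¹.injective hap]
  tauto

-- The case `a = 0` of the previous lemma, since `IsShuffleOfTail 0 g ↔ g = 1`.
theorem isShuffleOfTail_one_iff {g : GG m n} :
    IsShuffleOfTail 1 g ↔ ∃ p t, insertCard p t = g := by
  constructor
  · intro hg
    obtain ⟨p, hp⟩ :=
      exists_isInsertionPoint (Nat.pos_of_neZero n) (isShuffleOfTail_iff.1 hg).2
    refine ⟨p, g.left 0, inv_mul_eq_one.1 (isShuffleOfTail_zero_iff.1 ?_)⟩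
    exact (isShuffleOfTail_insertCard_inv_mul_of_le _ g (Nat.zero_le _)).2 ⟨hg, rfl, hp⟩
  · rintro ⟨p, t, rfl⟩
    refine ((isShuffleOfTail_insertCard_inv_mul_of_le t _ (Nat.zero_le p)).1 ?_).1
    rw [inv_mul_cancel]
    exact isShuffleOfTail_zero_iff.2 rfl

end Shuffles

section GroupAlgebra

variable {m n : ℕ} [NeZero m]

theorem coeff_B (a : ℕ) (g : GG m n) :
    (B m n a).coeff g = if IsShuffleOfTail a g then 1 else 0 := by
  simp [B, coeff_sum, of_apply, coeff_single, Finsupp.single_apply]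

theorem B_zero : B m n 0 = 1 := by
  simp [B, isShuffleOfTail_zero_iff, filter_eq', one_def]

theorem B_one [NeZero n] :
    B m n 1 = ∑ p : Fin n, ∑ t : Cm m, of ℚ (GG m n) (insertCard p t) := by
  have hS : univ.filter (IsShuffleOfTail 1) =
      univ.image fun pt : Fin n × Cm m => insertCard pt.1 pt.2 := by
    ext g
    simp [isShuffleOfTail_one_iff]
  rw [B, hS, sum_image fun x _ y _ h => insertCard_injective h, Fintype.sum_prod_type]

theorem sum_ite_isShuffleOfTail_insertCard_inv_mul [NeZero n] (a : ℕ) (π : GG m n) (p : Fin n) :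
    ∑ t : Cm m, (if IsShuffleOfTail a ((insertCard p t)⁻¹ * π) then (1 : ℚ) else 0) =
      (if (p : ℕ) < a then (m : ℚ) * (if IsShuffleOfTail a π then 1 else 0) else 0) +
        if IsShuffleOfTail (a + 1) π ∧ IsInsertionPoint ⇑π.right⁻¹ a p then 1 else 0 := by
  by_cases hpa : (p : ℕ) < a
  · have hp : ¬ IsInsertionPoint ⇑π.right⁻¹ a p := fun h => h.1.not_gt hpa
    simp only [isShuffleOfTail_insertCard_inv_mul_of_lt _ π hpa, if_pos hpa, hp, and_false,
      if_false, add_zero]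
    simp
  · rw [if_neg hpa, zero_add]
    simp only [isShuffleOfTail_insertCard_inv_mul_of_le _ π (not_lt.1 hpa)]
    by_cases h : IsShuffleOfTail (a + 1) π ∧ IsInsertionPoint ⇑π.right⁻¹ a p
    · simp only [h.1, h.2, true_and, and_true, if_true, sum_ite_eq, mem_univ]
    · rw [if_neg h]
      exact sum_eq_zero fun t _ => if_neg fun h' => h ⟨h'.1, h'.2.2⟩

theorem coeff_B_one_mul_B {a : ℕ} (ha : a < n) (π : GG m n) :
    (B m n 1 * B m n a).coeff π =
      (if IsShuffleOfTail (a + 1) π then 1 else 0) +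
        ((a * m : ℕ) : ℚ) * if IsShuffleOfTail a π then 1 else 0 := by
  have : NeZero n := NeZero.of_pos (by omega)
  simp only [B_one, sum_mul, coeff_sum, Finset.sum_apply', of_apply, coeff_single_mul_apply,
    one_mul, coeff_B]
  rw [sum_congr rfl fun p _ => sum_ite_isShuffleOfTail_insertCard_inv_mul a π p, sum_add_distrib,
    add_comm]
  congr 1
  · by_cases hπ : IsShuffleOfTail (a + 1) π
    · obtain ⟨p₀, hp₀, huniq⟩ := existsUnique_isInsertionPoint ha (isShuffleOfTail_iff.1 hπ).2
      rw [sum_eq_single p₀ (fun p _ hp => if_neg fun h => hp (huniq p h.2)) (by simp),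
        if_pos ⟨hπ, hp₀⟩, if_pos hπ]
    · rw [if_neg hπ]
      exact sum_eq_zero fun p _ => if_neg fun h => hπ h.1
  · rw [← sum_filter, sum_const, Fin.card_filter_val_lt, min_eq_right ha.le, nsmul_eq_mul]
    push_cast
    ring

theorem B_one_mul_B {a : ℕ} (ha : a < n) :
    B m n 1 * B m n a = B m n (a + 1) + ((a * m : ℕ) : MonoidAlgebra ℚ (GG m n)) * B m n a := by
  refine coeff_injective (Finsupp.ext fun π => ?_)
  rw [coeff_B_one_mul_B ha, coeff_add, Finsupp.add_apply, natCast_def, coeff_single_mul_apply,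
    inv_one, one_mul, coeff_B, coeff_B]

end GroupAlgebra

/-- `B_{a+1} = (B_1 − a·m)·B_a` for `0 ≤ a ≤ n−1`, and hence
`B_a = B_1(B_1 − m)(B_1 − 2m)⋯(B_1 − (a−1)m)` for `0 ≤ a ≤ n`. -/
theorem B_recurrence (m n : ℕ) [NeZero m] :
    (∀ a : ℕ, a ≤ n - 1 →
      B m n (a + 1) = (B m n 1 - ((a * m : ℕ) : MonoidAlgebra ℚ (GG m n))) * B m n a) ∧
    (∀ a : ℕ, a ≤ n →
      B m n a = (((List.range a).map
        (fun j => B m n 1 - ((j * m : ℕ) : MonoidAlgebra ℚ (GG m n)))).prod)) := by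
  have step (a : ℕ) (ha : a ≤ n - 1) :
      B m n (a + 1) = (B m n 1 - ((a * m : ℕ) : MonoidAlgebra ℚ (GG m n))) * B m n a := by
    rcases Nat.lt_or_ge a n with han | hna
    · rw [sub_mul, B_one_mul_B han, add_sub_cancel_right]
    · obtain rfl : a = 0 := by omega
      simp [B_zero]
  refine ⟨step, fun a => ?_⟩
  induction a with
  | zero => simp [B_zero]
  | succ a ih =>
    intro ha
    rw [step a (by omega), ih (by omega), List.range_succ, List.map_append, List.prod_append,
      List.map_singleton, List.prod_singleton]
    refine (Commute.list_prod_right _ _ fun y hy => ?_).eq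
    obtain ⟨j, -, rfl⟩ := List.mem_map.1 hy
    exact ((Commute.refl _).sub_right (Nat.cast_commute _ _).symm).sub_left (Nat.cast_commute _ _)
end

section
/- Let P be the doubly stochastic transition matrix of the top-to-random shuffle on G(m,1,n) with m > 1 (uniform over the mn group elements appearing in ⁽ᵐ⁾Ш_{1,n-1}, i.e., P = (1/(mn))·L_{⁽ᵐ⁾Ш} in the regular representation). Then there is a constant α > 0 such that |P^k_{ij} − 1/(m^n n!)| ≤ α·((n−1)/n)^k for all k ≥ 1 and all i,j. -/
open Finset Multiplicative

/-- The 1-shuffle element `⁽ᵐ⁾Ш_{1,n-1}` in the real group algebra `ℝ G(m,1,n)`. -/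
noncomputable def mshaR (m n : ℕ) : MonoidAlgebra ℝ (GG m n) :=
  (∑ l ∈ Finset.range n, MonoidAlgebra.of ℝ (GG m n)
      (((List.range l).map (fun p => sGen m n (n - 1 - l + p))).prod)) *
  (∑ a ∈ Finset.range m, MonoidAlgebra.of ℝ (GG m n) (tGen m n (n - 1) ^ a))

/-- The transition matrix of the top-to-random shuffle on `G(m,1,n)`: the matrix of
`(1/(mn))·L_{⁽ᵐ⁾Ш_{1,n-1}}` in the regular representation, i.e.
`P g h = (1/(mn)) · (coefficient of `g h⁻¹` in `⁽ᵐ⁾Ш_{1,n-1}`)`. -/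
noncomputable def P (m n : ℕ) [NeZero m] : Matrix (GG m n) (GG m n) ℝ :=
  fun g h => ((m * n : ℝ))⁻¹ * (mshaR m n).coeff (g * h⁻¹)

/-!
In the convention of `P`, a step of the chain undoes a top-to-random move: it chooses a card `c`
and a turn `r`, moves `c` to the top and turns it by `-r`, so that `(P ^ k) g h` is `(mn)⁻ᵏ`
times the number of such card words of length `k` leading from `g` to `h`. Once every card has
been touched, the cards are stacked in the order of their most recent touches and each carries its
starting rotation minus its total turn. Hence relabelling the cards of a word and changing the
most recent turn of each card realise right multiplication by any group element, and the words
touching every card are equidistributed over the group. All other words avoid one of the `n`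
cards, and for a given card there are `((n - 1) m)ᵏ` of them.
-/

namespace List

variable {α : Type*}

def words [DecidableEq α] (s : Finset α) : ℕ → Finset (List α)
  | 0 => {[]}
  | k + 1 => (s ×ˢ words s k).image fun p => p.1 :: p.2

variable [DecidableEq α] {s : Finset α}

theorem mem_words {k : ℕ} {W : List α} : W ∈ words s k ↔ W.length = k ∧ ∀ a ∈ W, a ∈ s := by
  induction k generalizing W with
  | zero => simp +contextual [words, List.length_eq_zero_iff]
  | succ k ih =>
    cases W with
    | nil => simp [words]
    | cons a W => simp [words, ih, and_assoc, and_left_comm]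

theorem mem_words_univ [Fintype α] {k : ℕ} {W : List α} : W ∈ words univ k ↔ W.length = k := by
  simp [mem_words]

theorem card_filter_words_succ (k : ℕ) (p : List α → Prop) [DecidablePred p] :
    #{W ∈ words s (k + 1) | p W} = ∑ a ∈ s, #{W ∈ words s k | p (a :: W)} := by
  rw [words, filter_image, card_image_of_injective _ fun _ _ h => by simpa [Prod.ext_iff] using h]
  simp only [card_filter, sum_product]

theorem card_words (k : ℕ) : #(words s k) = #s ^ k := by
  induction k with
  | zero => rfl
  | succ k ih =>
    rw [words, card_image_of_injective _ fun _ _ h => by simpa [Prod.ext_iff] using h,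
      card_product, ih, pow_succ']

section Pairs

variable {β : Type*} [AddCommGroup β]

def sumSndOf (l : List (α × β)) (a : α) : β := ((l.filter (·.1 = a)).map Prod.snd).sum

theorem sumSndOf_nil (a : α) : sumSndOf ([] : List (α × β)) a = 0 := rfl

theorem sumSndOf_cons (a a' : α) (b : β) (l : List (α × β)) :
    sumSndOf ((a', b) :: l) a = (if a' = a then b else 0) + sumSndOf l a := by
  by_cases h : a' = a <;> simp [sumSndOf, h]

def shiftFirst (Δ : α → β) : List (α × β) → List (α × β)
  | [] => []
  | (a, b) :: l => (a, b - Δ a) :: shiftFirst (Function.update Δ a 0) l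

theorem map_fst_shiftFirst (Δ : α → β) (l : List (α × β)) :
    (shiftFirst Δ l).map Prod.fst = l.map Prod.fst := by
  induction l generalizing Δ with
  | nil => rfl
  | cons p l ih => simp [shiftFirst, ih]

theorem length_shiftFirst (Δ : α → β) (l : List (α × β)) : (shiftFirst Δ l).length = l.length := by
  simpa using congrArg length (map_fst_shiftFirst Δ l)

theorem sumSndOf_shiftFirst (Δ : α → β) (l : List (α × β)) (a : α) :
    sumSndOf (shiftFirst Δ l) a = sumSndOf l a - if a ∈ l.map Prod.fst then Δ a else 0 := by
  induction l generalizing Δ with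
  | nil => simp [shiftFirst, sumSndOf_nil]
  | cons p l ih =>
    obtain ⟨a', b⟩ := p
    rw [shiftFirst, sumSndOf_cons, sumSndOf_cons, ih]
    by_cases h : a' = a
    · subst h
      simp only [Function.update_self, ite_self, sub_zero, if_pos, map_cons, mem_cons, true_or]
      abel
    · simp only [map_cons, mem_cons, Ne.symm h, false_or, Function.update_of_ne (Ne.symm h),
        if_neg h, zero_add]

theorem shiftFirst_injective (Δ : α → β) : Function.Injective (shiftFirst Δ) := by
  intro l l' h
  induction l generalizing Δ l' with
  | nil => cases l' <;> simp_all [shiftFirst]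
  | cons p l ih =>
    cases l' with
    | nil => simp [shiftFirst] at h
    | cons p' l' =>
      obtain ⟨a, b⟩ := p
      obtain ⟨a', b'⟩ := p'
      simp only [shiftFirst, List.cons.injEq, Prod.mk.injEq] at h
      obtain ⟨⟨rfl, hb⟩, hl⟩ := h
      rw [sub_left_inj] at hb
      rw [hb, ih _ hl]

end Pairs

end List

section StepMatrix

variable (R : Type*) [Semiring R] {E S : Type*} [Fintype E] [Fintype S] [DecidableEq S]

def stepMatrix (T : E → S → S) : Matrix S S R :=
  Matrix.of fun x y => (#{e | T e x = y} : R)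

variable [DecidableEq E]

theorem stepMatrix_pow_apply (T : E → S → S) (k : ℕ) (x y : S) :
    (stepMatrix R T ^ k) x y = #{W ∈ List.words univ k | W.foldr T x = y} := by
  induction k generalizing y with
  | zero => by_cases h : x = y <;> simp [List.words, filter_singleton, h]
  | succ k ih =>
    have fiber (e : E) : #{W ∈ List.words univ k | (e :: W).foldr T x = y} =
        ∑ z, if T e z = y then #{W ∈ List.words univ k | W.foldr T x = z} else 0 := by
      rw [card_eq_sum_card_fiberwise fun W _ => mem_univ (W.foldr T x)]
      refine sum_congr rfl fun z _ => ?_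
      split_ifs with h
      · simp only [filter_filter]
        exact congrArg card <| filter_congr fun W _ => by
          constructor <;> rintro ⟨h1, h2⟩ <;> simp_all
      · simp only [filter_filter, card_eq_zero, filter_eq_empty_iff]
        rintro W _ ⟨h1, rfl⟩
        exact h h1
    have paths : ∑ e, #{W ∈ List.words univ k | (e :: W).foldr T x = y} =
        ∑ z, #{W ∈ List.words univ k | W.foldr T x = z} * #{e | T e z = y} := by
      simp only [fiber]
      rw [sum_comm]
      simp [sum_ite, mul_comm]
    calc (stepMatrix R T ^ (k + 1)) x y
        = ∑ z, (#{W ∈ List.words univ k | W.foldr T x = z} : R) * #{e | T e z = y} := by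
          rw [pow_succ, Matrix.mul_apply]
          exact sum_congr rfl fun z _ => by rw [ih]; rfl
      _ = _ := by
          rw [List.card_filter_words_succ, paths]
          push_cast
          rfl

end StepMatrix

theorem abs_card_fiber_mul_card_sub_card_le {α β : Type*} [Fintype β] [DecidableEq β]
    (s : Finset α) (f : α → β) (p : α → Prop) [DecidablePred p]
    (hp : ∀ x y, #{a ∈ s | p a ∧ f a = x} = #{a ∈ s | p a ∧ f a = y}) (x : β) :
    |(#{a ∈ s | f a = x} : ℝ) * Fintype.card β - #s| ≤ #{a ∈ s | ¬p a} * Fintype.card β := by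
  have split (y : β) :
      #{a ∈ s | f a = y} = #{a ∈ s | p a ∧ f a = y} + #{a ∈ s | ¬p a ∧ f a = y} := by
    rw [← card_filter_add_card_filter_not (s := {a ∈ s | f a = y}) p]
    simp only [filter_filter, and_comm]
  have total : #s = Fintype.card β * #{a ∈ s | p a ∧ f a = x} + #{a ∈ s | ¬p a} := by
    have bad_fibers : #{a ∈ s | ¬p a} = ∑ y, #{a ∈ s | ¬p a ∧ f a = y} := by
      rw [card_eq_sum_card_fiberwise fun a _ => mem_univ (f a)]
      simp only [filter_filter]
    rw [card_eq_sum_card_fiberwise fun a _ => mem_univ (f a), bad_fibers]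
    simp only [split, sum_add_distrib, hp _ x, sum_const, card_univ, smul_eq_mul]
  have bad : #{a ∈ s | ¬p a ∧ f a = x} ≤ #{a ∈ s | ¬p a} :=
    card_le_card fun a ha => by simp only [mem_filter] at ha ⊢; exact ⟨ha.1, ha.2.1⟩
  have hβ : (1 : ℝ) ≤ Fintype.card β := by exact_mod_cast Fintype.card_pos_iff.mpr ⟨x⟩
  rw [split, total]
  push_cast
  rw [abs_le]
  constructor <;> nlinarith [(Nat.cast_le (α := ℝ)).mpr bad]

namespace TopToRandom

open SemidirectProduct

variable {m n : ℕ}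

/-- `x` is read as a deck: `x.right c` is the position of card `c` (the top is `n - 1`) and
`rot x c` is the rotation of card `c`. -/
def rot (x : GG m n) (c : Fin n) : ZMod m := toAdd (x.left (x.right c))

theorem ext_of_right_of_rot {x y : GG m n} (hright : x.right = y.right)
    (hrot : ∀ c, rot x c = rot y c) : x = y := by
  refine SemidirectProduct.ext (funext fun p => ?_) hright
  simpa [rot, hright] using congrArg ofAdd (hrot (y.right.symm p))

theorem rot_mul (a x : GG m n) (c : Fin n) :
    rot (a * x) c = toAdd (a.left ((a * x).right c)) + rot x c := by
  simp [rot, wrAct]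

theorem rot_one (c : Fin n) : rot (1 : GG m n) c = 0 := rfl

theorem rot_mul_inl (x : GG m n) (δ : Fin n → Cm m) (c : Fin n) :
    rot (x * inl δ) c = rot x c + toAdd (δ c) := by
  rw [rot_mul]
  simp [rot]

theorem eq_inr_mul_inl (z : GG m n) : z = inr z.right * inl (fun c => z.left (z.right c)) := by
  refine SemidirectProduct.ext (funext fun p => ?_) ?_
  · rw [SemidirectProduct.mul_left, left_inr, one_mul, left_inl, right_inr]
    simp [wrAct]
  · simp

section Generators

variable (m n)

def top [NeZero n] : Fin n := ⟨n - 1, Nat.sub_one_lt (NeZero.ne n)⟩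

def adjSwap (i : ℕ) : Equiv.Perm (Fin n) :=
  if h : i + 1 < n then Equiv.swap ⟨i, Nat.lt_of_succ_lt h⟩ ⟨i + 1, h⟩ else 1

/-- The permutation part of `s_{n-l} ⋯ s_{n-1}`; it carries the top position `n - 1` to
`n - 1 - l`. -/
def insertTop (l : ℕ) : Equiv.Perm (Fin n) :=
  ((List.range l).map fun p => adjSwap n (n - 1 - l + p)).prod

theorem sGen_eq_inr (i : ℕ) : sGen m n i = inr (adjSwap n i) := by
  unfold sGen adjSwap
  split <;> simp

theorem insertTop_succ {l : ℕ} (hl : l + 1 < n) :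
    insertTop n (l + 1) = adjSwap n (n - 1 - (l + 1)) * insertTop n l := by
  rw [insertTop, List.range_succ_eq_map, List.map_cons, List.map_map, List.prod_cons]
  congr 3
  funext p
  simp only [Function.comp_apply]
  congr 1
  omega

theorem insertTop_apply_val {l : ℕ} (hl : l < n) (p : Fin n) :
    (insertTop n l p).val =
      if p.val = n - 1 then n - 1 - l else if n - 1 - l ≤ p.val then p.val + 1 else p.val := by
  induction l with
  | zero =>
    have := p.isLt
    simp only [insertTop, List.range_zero, List.map_nil, List.prod_nil, Equiv.Perm.coe_one, id_eq]
    split_ifs <;> omega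
  | succ l ih =>
    have hs : n - 1 - (l + 1) + 1 < n := by omega
    rw [insertTop_succ n (by omega), Equiv.Perm.mul_apply, adjSwap, dif_pos hs,
      Equiv.swap_apply_def]
    have hq := ih (by omega)
    have := (insertTop n l p).isLt
    split_ifs at hq ⊢ <;> simp only [Fin.ext_iff] at * <;> omega

theorem insertTop_symm_apply_val {l : ℕ} (hl : l < n) (p : Fin n) :
    ((insertTop n l).symm p).val =
      if p.val = n - 1 - l then n - 1 else if n - 1 - l < p.val then p.val - 1 else p.val := by
  have h := insertTop_apply_val n hl ((insertTop n l).symm p)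
  rw [Equiv.apply_symm_apply] at h
  have := ((insertTop n l).symm p).isLt
  split_ifs at h ⊢ <;> omega

variable {m n} [NeZero n]

def shuffleTerm (e : Fin n × ZMod m) : GG m n :=
  inr (insertTop n e.1) * inl (Pi.mulSingle (top n) (ofAdd e.2))

theorem tGen_pow (a : ℕ) :
    tGen m n (n - 1) ^ a = inl (Pi.mulSingle (top n) (ofAdd (a : ZMod m))) := by
  rw [tGen, dif_pos (Nat.sub_one_lt (NeZero.ne n)), ← map_pow, ← Pi.mulSingle_pow, ← ofAdd_nsmul,
    nsmul_one]
  rfl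

theorem mshaR_eq_sum [NeZero m] :
    mshaR m n = ∑ e : Fin n × ZMod m, MonoidAlgebra.single (shuffleTerm e) 1 := by
  have hs (l : ℕ) : ((List.range l).map fun p => sGen m n (n - 1 - l + p)).prod =
      inr (insertTop n l) := by
    simp [insertTop, sGen_eq_inr, map_list_prod, List.map_map, Function.comp_def]
  have hcoe : ∑ a ∈ range m, MonoidAlgebra.of ℝ (GG m n) (tGen m n (n - 1) ^ a) =
      ∑ r : ZMod m, MonoidAlgebra.of ℝ (GG m n) (inl (Pi.mulSingle (top n) (ofAdd r))) := by
    refine sum_nbij' (fun a => (a : ZMod m)) ZMod.val (by simp) (by simp [ZMod.val_lt])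
      (fun a ha => ZMod.val_cast_of_lt (mem_range.mp ha)) (fun r _ => ZMod.natCast_zmod_val r)
      fun a _ => by rw [tGen_pow]
  rw [mshaR, hcoe, ← Fin.sum_univ_eq_sum_range fun l =>
    MonoidAlgebra.of ℝ (GG m n) ((List.range l).map fun p => sGen m n (n - 1 - l + p)).prod,
    sum_mul_sum, Fintype.sum_prod_type]
  simp only [hs, MonoidAlgebra.of_apply, MonoidAlgebra.single_mul_single, mul_one, shuffleTerm]

theorem coeff_mshaR [NeZero m] (z : GG m n) :
    (mshaR m n).coeff z = #{e | shuffleTerm e = z} := by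
  simp [mshaR_eq_sum, MonoidAlgebra.coeff_sum, Finsupp.single_apply]

end Generators

section Cards

variable [NeZero n]

theorem inv_shuffleTerm (e : Fin n × ZMod m) :
    (shuffleTerm e)⁻¹ = inl (Pi.mulSingle (top n) (ofAdd (-e.2))) * inr (insertTop n e.1)⁻¹ := by
  simp [shuffleTerm, ← map_inv, Pi.mulSingle_inv]

/-- The step `x ↦ (shuffleTerm e)⁻¹ * x` of the chain, indexed by the card it moves to the top
instead of the depth. -/
def cardStep (e : Fin n × ZMod m) (x : GG m n) : GG m n :=
  (shuffleTerm (Fin.rev (x.right e.1), e.2))⁻¹ * x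

theorem cardStep_right_val (c d : Fin n) (r : ZMod m) (x : GG m n) :
    ((cardStep (c, r) x).right d).val =
      if d = c then n - 1 else if x.right c < x.right d then (x.right d).val - 1
      else (x.right d).val := by
  have hc := (x.right c).isLt
  have hinj : x.right d = x.right c ↔ d = c := x.right.injective.eq_iff
  rw [cardStep, inv_shuffleTerm]
  simp only [SemidirectProduct.mul_right, right_inl, right_inr, one_mul, Equiv.Perm.mul_apply,
    Equiv.Perm.inv_def]
  rw [insertTop_symm_apply_val n (Fin.rev (x.right c)).isLt]
  simp only [Fin.val_rev, Fin.lt_def, ← hinj, Fin.ext_iff]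
  split_ifs <;> omega

theorem cardStep_right_eq_top_iff (c d : Fin n) (r : ZMod m) (x : GG m n) :
    (cardStep (c, r) x).right d = top n ↔ d = c := by
  have h := cardStep_right_val c d r x
  have hd := (x.right d).isLt
  have hinj : x.right d = x.right c ↔ d = c := x.right.injective.eq_iff
  rw [Fin.ext_iff, h, top]
  simp only [Fin.lt_def, ← hinj, Fin.ext_iff] at *
  split_ifs <;> omega

theorem rot_cardStep (c d : Fin n) (r : ZMod m) (x : GG m n) :
    rot (cardStep (c, r) x) d = rot x d - if d = c then r else 0 := by
  rw [cardStep, rot_mul, ← cardStep, inv_shuffleTerm]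
  simp only [SemidirectProduct.mul_left, left_inl, left_inr, right_inl, map_one,
    mul_one, Pi.mulSingle_apply, cardStep_right_eq_top_iff]
  split_ifs <;> simp [sub_eq_neg_add]

theorem cardStep_mul (e : Fin n × ZMod m) (x y : GG m n) :
    cardStep e (x * y) = cardStep (y.right e.1, e.2) x * y := by
  simp [cardStep, mul_assoc]

end Cards

theorem P_eq_smul_stepMatrix [NeZero m] [NeZero n] :
    P m n = ((m * n : ℝ))⁻¹ • stepMatrix ℝ (cardStep (m := m) (n := n)) := by
  ext x y
  simp only [P, stepMatrix, Matrix.smul_apply, Matrix.of_apply, coeff_mshaR, smul_eq_mul]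
  congr 2
  refine (card_equiv ((x.right.trans Fin.revPerm).prodCongr (Equiv.refl _)) fun e => ?_).symm
  simp only [mem_filter, mem_univ, true_and, cardStep, inv_mul_eq_iff_eq_mul, eq_mul_inv_iff_mul_eq]
  exact eq_comm

theorem P_pow_apply [NeZero m] [NeZero n] (k : ℕ) (g h : GG m n) :
    (P m n ^ k) g h =
      ((m * n : ℝ) ^ k)⁻¹ * #{cw ∈ List.words univ k | cw.foldr cardStep g = h} := by
  rw [P_eq_smul_stepMatrix, smul_pow, Matrix.smul_apply, stepMatrix_pow_apply, inv_pow, smul_eq_mul]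

section CardWords

def AllTouched (cw : List (Fin n × ZMod m)) : Prop := ∀ c, c ∈ cw.map Prod.fst

instance (cw : List (Fin n × ZMod m)) : Decidable (AllTouched cw) :=
  inferInstanceAs (Decidable (∀ c, c ∈ cw.map Prod.fst))

theorem AllTouched.relabel {cw : List (Fin n × ZMod m)} (hcw : AllTouched cw)
    (τ : Equiv.Perm (Fin n)) : AllTouched (cw.map (Prod.map τ id)) := fun c => by
  simpa [List.map_map, Function.comp_def] using List.mem_map_of_mem (f := τ) (hcw (τ.symm c))

theorem AllTouched.shiftFirst {cw : List (Fin n × ZMod m)} (hcw : AllTouched cw)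
    (Δ : Fin n → ZMod m) : AllTouched (cw.shiftFirst Δ) := by
  rw [AllTouched, List.map_fst_shiftFirst]
  exact hcw

variable [NeZero m]

theorem card_filter_fst_ne (c : Fin n) : #{e : Fin n × ZMod m | e.1 ≠ c} = (n - 1) * m := by
  have h : ({e : Fin n × ZMod m | e.1 ≠ c} : Finset _) = (univ.erase c) ×ˢ univ := by
    ext e
    simp
  rw [h, card_product, card_erase_of_mem (mem_univ c), card_univ, card_univ, Fintype.card_fin,
    ZMod.card]

theorem card_not_allTouched_le (k : ℕ) :
    #{cw ∈ (List.words univ k : Finset (List (Fin n × ZMod m))) | ¬AllTouched cw} ≤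
      n * ((n - 1) * m) ^ k := by
  have cover : {cw ∈ (List.words univ k : Finset (List (Fin n × ZMod m))) | ¬AllTouched cw} ⊆
      univ.biUnion fun c => List.words {e : Fin n × ZMod m | e.1 ≠ c} k := by
    intro cw hcw
    simp only [mem_filter, List.mem_words_univ, AllTouched, not_forall] at hcw
    obtain ⟨hk, c, hc⟩ := hcw
    simp only [mem_biUnion, mem_univ, true_and, List.mem_words, mem_filter]
    exact ⟨c, hk, fun e he h => hc (h ▸ List.mem_map_of_mem he)⟩
  calc _
      ≤ ∑ c : Fin n, #(List.words {e : Fin n × ZMod m | e.1 ≠ c} k) :=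
        (card_le_card cover).trans card_biUnion_le
    _ = n * ((n - 1) * m) ^ k := by simp [List.card_words, card_filter_fst_ne]

end CardWords

section Deal

variable [NeZero n]

theorem right_foldr_cardStep_lt {cw : List (Fin n × ZMod m)} {c d : Fin n}
    (hc : c ∈ cw.map Prod.fst) (hd : d ∉ cw.map Prod.fst) (x : GG m n) :
    (cw.foldr cardStep x).right d < (cw.foldr cardStep x).right c := by
  induction cw with
  | nil => simp at hc
  | cons e cw ih =>
    obtain ⟨c₀, r⟩ := e
    simp only [List.map_cons, List.mem_cons, not_or] at hc hd
    have hne := Fin.val_ne_of_ne ((cw.foldr cardStep x).right.injective.ne hd.1)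
    have hd' := ((cw.foldr cardStep x).right d).isLt
    rw [Fin.lt_def, List.foldr_cons, cardStep_right_val, cardStep_right_val, if_neg hd.1]
    rcases hc with rfl | hc
    · rw [if_pos rfl]
      split_ifs <;> omega
    · have := Fin.lt_def.mp (ih hc hd.2)
      split_ifs <;> simp only [Fin.lt_def] at * <;> omega

theorem right_foldr_cardStep_eq {cw : List (Fin n × ZMod m)} {c : Fin n}
    (hc : c ∈ cw.map Prod.fst) (x x' : GG m n) :
    (cw.foldr cardStep x).right c = (cw.foldr cardStep x').right c := by
  induction cw generalizing c with
  | nil => simp at hc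
  | cons e cw ih =>
    obtain ⟨c₀, r⟩ := e
    rw [Fin.ext_iff, List.foldr_cons, List.foldr_cons, cardStep_right_val, cardStep_right_val]
    by_cases h : c = c₀
    · simp [h]
    · have hc' : c ∈ cw.map Prod.fst := by simpa [h] using hc
      have order : (cw.foldr cardStep x).right c₀ < (cw.foldr cardStep x).right c ↔
          (cw.foldr cardStep x').right c₀ < (cw.foldr cardStep x').right c := by
        by_cases h₀ : c₀ ∈ cw.map Prod.fst
        · rw [ih h₀, ih hc']
        · simp only [right_foldr_cardStep_lt hc' h₀]
      rw [if_neg h, if_neg h]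
      by_cases hlt : (cw.foldr cardStep x).right c₀ < (cw.foldr cardStep x).right c
      · rw [if_pos hlt, if_pos (order.mp hlt), ih hc']
      · rw [if_neg hlt, if_neg (mt order.mpr hlt), ih hc']

theorem cardStep_right_congr (c : Fin n) (r r' : ZMod m) {x x' : GG m n}
    (h : x.right = x'.right) : (cardStep (c, r) x).right = (cardStep (c, r') x').right := by
  ext d
  rw [cardStep_right_val, cardStep_right_val, h]

theorem right_foldr_cardStep_congr {cw cw' : List (Fin n × ZMod m)}
    (h : cw.map Prod.fst = cw'.map Prod.fst) (x : GG m n) :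
    (cw.foldr cardStep x).right = (cw'.foldr cardStep x).right := by
  induction cw generalizing cw' with
  | nil => rw [List.eq_nil_of_map_eq_nil h.symm]
  | cons e cw ih =>
    cases cw' with
    | nil => simp at h
    | cons e' cw' =>
      simp only [List.map_cons, List.cons.injEq] at h
      rw [List.foldr_cons, List.foldr_cons, ← Prod.mk.eta (p := e), ← Prod.mk.eta (p := e'), h.1]
      exact cardStep_right_congr _ _ _ (ih h.2)

theorem rot_foldr_cardStep (cw : List (Fin n × ZMod m)) (x : GG m n) (c : Fin n) :
    rot (cw.foldr cardStep x) c = rot x c - cw.sumSndOf c := by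
  induction cw with
  | nil => simp [List.sumSndOf_nil]
  | cons e cw ih =>
    obtain ⟨c₀, r⟩ := e
    rw [List.foldr_cons, rot_cardStep, ih, List.sumSndOf_cons]
    by_cases h : c = c₀ <;> simp [h, eq_comm]; abel

theorem foldr_cardStep_mul (cw : List (Fin n × ZMod m)) (x y : GG m n) :
    cw.foldr cardStep (x * y) = (cw.map (Prod.map y.right id)).foldr cardStep x * y := by
  induction cw with
  | nil => rfl
  | cons e cw ih =>
    rw [List.foldr_cons, ih, cardStep_mul]
    rfl

theorem foldr_cardStep_of_allTouched {cw : List (Fin n × ZMod m)} (hcw : AllTouched cw)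
    (x : GG m n) : cw.foldr cardStep x = cw.foldr cardStep 1 * inl fun c => x.left (x.right c) := by
  refine ext_of_right_of_rot ?_ fun c => ?_
  · ext c
    simp [right_foldr_cardStep_eq (hcw c) x 1]
  · rw [rot_mul_inl, rot_foldr_cardStep, rot_foldr_cardStep, rot_one, rot]
    abel

theorem foldr_cardStep_relabel {cw : List (Fin n × ZMod m)} (hcw : AllTouched cw)
    (τ : Equiv.Perm (Fin n)) :
    (cw.map (Prod.map τ id)).foldr cardStep 1 = cw.foldr cardStep 1 * (inr τ)⁻¹ := by
  have h := foldr_cardStep_mul cw 1 (inr τ)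
  rw [one_mul, foldr_cardStep_of_allTouched hcw] at h
  simpa [eq_mul_inv_iff_mul_eq, ← Pi.one_def] using h.symm

theorem foldr_cardStep_shiftFirst {cw : List (Fin n × ZMod m)} (hcw : AllTouched cw)
    (Δ : Fin n → ZMod m) :
    (cw.shiftFirst Δ).foldr cardStep 1 = cw.foldr cardStep 1 * inl fun c => ofAdd (Δ c) := by
  refine ext_of_right_of_rot ?_ fun c => ?_
  · simp [right_foldr_cardStep_congr (List.map_fst_shiftFirst Δ cw)]
  · rw [rot_mul_inl, rot_foldr_cardStep, rot_foldr_cardStep, List.sumSndOf_shiftFirst,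
      if_pos (hcw c), toAdd_ofAdd]
    abel

variable [NeZero m]

/-- Right multiplication by `inr σ * inl δ` is realised by relabelling the cards by `σ⁻¹` and then
changing the most recent turn of each card `c` by `δ c`. -/
theorem card_allTouched_foldr_cardStep_le (k : ℕ) (x z : GG m n) :
    #{cw ∈ List.words univ k | AllTouched cw ∧ cw.foldr cardStep 1 = x} ≤
      #{cw ∈ List.words univ k | AllTouched cw ∧ cw.foldr cardStep 1 = x * z} := by
  set σ := z.right
  set δ : Fin n → Cm m := fun c => z.left (z.right c)
  let φ (cw : List (Fin n × ZMod m)) := (cw.map (Prod.map ⇑σ⁻¹ id)).shiftFirst fun c => toAdd (δ c)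
  refine card_le_card_of_injOn φ (fun cw hcw => ?_) fun cw _ cw' _ h => ?_
  · simp only [coe_filter, Set.mem_ofPred_eq, List.mem_words_univ] at hcw ⊢
    obtain ⟨hk, hall, rfl⟩ := hcw
    refine ⟨by simp [φ, List.length_shiftFirst, hk], (hall.relabel _).shiftFirst _, ?_⟩
    rw [foldr_cardStep_shiftFirst (hall.relabel _), foldr_cardStep_relabel hall,
      eq_inr_mul_inl z]
    simp [σ, δ, mul_assoc]
  · exact List.map_injective_iff.mpr (Prod.map_injective.mpr ⟨σ⁻¹.injective, Function.injective_id⟩)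
      (List.shiftFirst_injective _ h)

theorem card_allTouched_foldr_cardStep_eq (k : ℕ) (g x y : GG m n) :
    #{cw ∈ List.words univ k | AllTouched cw ∧ cw.foldr cardStep g = x} =
      #{cw ∈ List.words univ k | AllTouched cw ∧ cw.foldr cardStep g = y} := by
  have from_one (x : GG m n) : #{cw ∈ List.words univ k | AllTouched cw ∧ cw.foldr cardStep g = x} =
      #{cw ∈ List.words univ k | AllTouched cw ∧
        cw.foldr cardStep 1 = x * (inl fun c => g.left (g.right c))⁻¹} := by
    refine congrArg card (filter_congr fun cw _ => and_congr_right fun hcw => ?_)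
    rw [foldr_cardStep_of_allTouched hcw, eq_mul_inv_iff_mul_eq]
  have monotone (a b : GG m n) :
      #{cw ∈ List.words univ k | AllTouched cw ∧ cw.foldr cardStep 1 = a} ≤
        #{cw ∈ List.words univ k | AllTouched cw ∧ cw.foldr cardStep 1 = b} := by
    simpa using card_allTouched_foldr_cardStep_le k a (a⁻¹ * b)
  rw [from_one, from_one]
  exact le_antisymm (monotone _ _) (monotone _ _)

end Deal

theorem card_GG [NeZero m] : Fintype.card (GG m n) = m ^ n * n.factorial := by
  rw [Fintype.card_congr (ggEquiv m n), Fintype.card_prod, Fintype.card_perm, Fintype.card_fun,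
    Fintype.card_fin, Fintype.card_multiplicative, ZMod.card]

theorem abs_P_pow_sub_le [NeZero m] [NeZero n] (k : ℕ) (g h : GG m n) :
    |(P m n ^ k) g h - 1 / Fintype.card (GG m n)| ≤ n * ((n - 1 : ℝ) / n) ^ k := by
  have key := abs_card_fiber_mul_card_sub_card_le (List.words univ k) (List.foldr cardStep g)
    AllTouched (card_allTouched_foldr_cardStep_eq k g) h
  have hbad : (#{cw ∈ (List.words univ k : Finset (List (Fin n × ZMod m))) | ¬AllTouched cw} : ℝ) ≤
      n * ((n - 1) * m) ^ k := by
    have := card_not_allTouched_le (m := m) (n := n) k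
    rw [← Nat.cast_le (α := ℝ)] at this
    simpa [Nat.cast_sub (NeZero.one_le : 1 ≤ n)] using this
  rw [List.card_words, card_univ, Fintype.card_prod, Fintype.card_fin, ZMod.card] at key
  push_cast at key
  have hm : (0 : ℝ) < m := by exact_mod_cast Nat.pos_of_neZero m
  have hn : (0 : ℝ) < n := by exact_mod_cast Nat.pos_of_neZero n
  have hG : (0 : ℝ) < Fintype.card (GG m n) := by exact_mod_cast Fintype.card_pos
  have hD : (0 : ℝ) < (n * m) ^ k := by positivity
  rw [P_pow_apply]
  calc _ = |(#{cw ∈ List.words univ k | cw.foldr cardStep g = h} : ℝ) * Fintype.card (GG m n) -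
          (n * m) ^ k| / ((n * m) ^ k * Fintype.card (GG m n)) := by
        rw [← abs_of_pos (mul_pos hD hG), ← abs_div]
        congr 1
        field_simp
    _ ≤ (#{cw ∈ List.words univ k | ¬AllTouched cw} * Fintype.card (GG m n)) /
          ((n * m) ^ k * Fintype.card (GG m n)) := by gcongr
    _ ≤ n * ((n - 1) * m) ^ k / (n * m) ^ k := by
        rw [mul_div_mul_right _ _ hG.ne']
        gcongr
    _ = n * ((n - 1 : ℝ) / n) ^ k := by
        rw [mul_div_assoc, ← div_pow, mul_div_mul_right _ _ hm.ne']

end TopToRandom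

theorem convergence_to_uniform_general (m n : ℕ) [NeZero m] (hn : 0 < n) :
    ∃ α : ℝ, 0 < α ∧ ∀ k : ℕ, 1 ≤ k → ∀ g h : GG m n,
      |(P m n ^ k) g h - 1 / (m ^ n * n.factorial)| ≤ α * ((n - 1 : ℝ) / n) ^ k := by
  have : NeZero n := ⟨hn.ne'⟩
  refine ⟨n, by exact_mod_cast hn, fun k _ g h => ?_⟩
  simpa [TopToRandom.card_GG] using TopToRandom.abs_P_pow_sub_le k g h

/-- For `m > 1`, the top-to-random Markov chain on `G(m,1,n)` converges
to the uniform distribution at rate `(n−1)/n`: there is `α > 0` with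
`|P^k_{ij} − 1/(mⁿ n!)| ≤ α·((n−1)/n)^k` for all `k ≥ 1` and all `i, j`. -/
theorem convergence_to_uniform (m n : ℕ) [NeZero m] (hm : 1 < m) (hn : 0 < n) :
    ∃ α : ℝ, 0 < α ∧ ∀ k : ℕ, 1 ≤ k → ∀ g h : GG m n,
      |(P m n ^ k) g h - 1 / (m ^ n * n.factorial)| ≤ α * ((n - 1 : ℝ) / n) ^ k :=
  convergence_to_uniform_general m n hn
end
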